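/- arXiv:1903.06696 — 10 statements merged into one kernel-verified Lean document; each statement's English description precedes it below -/
import Mathlib

section
/- Let m ≥ 1 and let z₁ ≥ z₂ ≥ ... ≥ z_m be reals. Let J be a nonempty random subset of {1,...,m} whose distribution is invariant under permutations conditioned on its size (e.g., a uniformly random subset of each possible size), and let i* = max(J) be its largest element. Then E[z_{i*}] ≤ E_{i ∼ Uniform{1,...,m}}[z_i] whenever J is a uniformly random nonempty subset of fixed size q ≥ 1. -/
/-! Grouping the `q`-subsets of `{0, …, m-1}` by their maximum `k` (the other `q - 1` elements
are any subset of `{0, …, k-1}`) turns the left side into a weighted average of the `z k` with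
weights `k.choose (q - 1)`. These weights increase with `k` while `z` decreases, so by
Chebyshev's sum inequality the weighted average is at most the plain one. -/

open Finset

lemma sup_insert_of_subset_range {m : ℕ} {J : Finset ℕ} (hJ : J ⊆ range m) :
    (insert m J).sup id = m := by
  rw [sup_insert, id, sup_eq_left]
  exact Finset.sup_le fun k hk => (mem_range.mp (hJ hk)).le

lemma sum_powersetCard_succ_range_sup {M : Type*} [AddCommMonoid M] (r m : ℕ) (f : ℕ → M) :
    ∑ J ∈ (range m).powersetCard (r + 1), f (J.sup id) = ∑ k ∈ range m, k.choose r • f k := by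
  induction m with
  | zero => rw [range_zero, powersetCard_eq_empty.mpr (by simp), sum_empty, sum_empty]
  | succ m ih =>
    have hnotMem : ∀ J ∈ (range m).powersetCard r, m ∉ J := fun J hJ hm =>
      (mem_range.mp ((mem_powersetCard.mp hJ).1 hm)).false
    rw [range_add_one, powersetCard_succ_insert notMem_range_self, sum_union, sum_image,
      sum_insert notMem_range_self, ih, add_comm]
    · congr 1
      rw [sum_congr rfl fun J hJ => by rw [sup_insert_of_subset_range (mem_powersetCard.mp hJ).1],
        sum_const, card_powersetCard, card_range]
    · intro J hJ K hK hJK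
      rw [← erase_insert (hnotMem J hJ), ← erase_insert (hnotMem K hK), hJK]
    · rw [disjoint_left]
      rintro _ hJ hJ'
      obtain ⟨K, -, rfl⟩ := mem_image.mp hJ'
      exact (mem_range.mp ((mem_powersetCard.mp hJ).1 (mem_insert_self m K))).false

lemma AntivaryOn.sum_mul_div_sum_le_sum_div_card {ι α : Type*} [Field α] [LinearOrder α]
    [IsStrictOrderedRing α] {s : Finset ι} {w z : ι → α} (h : AntivaryOn w z s)
    (hw : 0 < ∑ i ∈ s, w i) (hs : s.Nonempty) :
    (∑ i ∈ s, w i * z i) / ∑ i ∈ s, w i ≤ (∑ i ∈ s, z i) / #s := by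
  rw [div_le_div_iff₀ hw (by exact_mod_cast hs.card_pos)]
  linarith [h.card_mul_sum_le_sum_mul_sum]

theorem expected_max_index_le_uniform_general (m q : ℕ) (hq : 1 ≤ q) (hqm : q ≤ m)
    (z : ℕ → ℝ) (hz : ∀ i j, i ≤ j → z j ≤ z i) :
    (∑ J ∈ (Finset.range m).powersetCard q, z (J.sup id))
        / (((Finset.range m).powersetCard q).card : ℝ)
      ≤ (∑ i ∈ Finset.range m, z i) / (m : ℝ) := by
  obtain ⟨r, rfl⟩ := Nat.exists_eq_add_of_le' hq
  have hcard : (#((range m).powersetCard (r + 1)) : ℝ) = ∑ k ∈ range m, (k.choose r : ℝ) := by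
    simpa using sum_powersetCard_succ_range_sup r m (fun _ => (1 : ℝ))
  have hweights : 0 < ∑ k ∈ range m, (k.choose r : ℝ) := by
    rw [← hcard]
    exact_mod_cast card_pos.mpr (powersetCard_nonempty.mpr (by simpa using hqm))
  have hanti : AntivaryOn (fun k => (k.choose r : ℝ)) z (range m) :=
    ((Nat.mono_cast.comp (Nat.choose_mono r)).antivary hz).antivaryOn _
  rw [sum_powersetCard_succ_range_sup, hcard]
  simp only [nsmul_eq_mul]
  simpa using hanti.sum_mul_div_sum_le_sum_div_card hweights (nonempty_range_iff.mpr (by omega))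

/-- Let `m ≥ 1` and `z 0 ≥ z 1 ≥ ...` be reals (nonincreasing in the index).  For a uniformly
random `q`-element subset `J` of `{0,...,m-1}` with `1 ≤ q ≤ m`, the expectation of
`z (max J)` is at most the expectation of `z i` for a uniform index `i`. -/
theorem expected_max_index_le_uniform (m q : ℕ) (hm : 1 ≤ m) (hq : 1 ≤ q) (hqm : q ≤ m)
    (z : ℕ → ℝ) (hz : ∀ i j, i ≤ j → z j ≤ z i) :
    (∑ J ∈ (Finset.range m).powersetCard q, z (J.sup id))
        / (((Finset.range m).powersetCard q).card : ℝ)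
      ≤ (∑ i ∈ Finset.range m, z i) / (m : ℝ) :=
  expected_max_index_le_uniform_general m q hq hqm z hz
end

section
/- Let b, s, p be i.i.d. real-valued random variables with a common atomless distribution F. Then E[(b-s)·1[b ≥ p ≥ s]] = E[(b-s)·1[p > b > s]] + E[(b-s)·1[b > s > p]], and consequently pricing at the sample p obtains exactly half of the expected optimal gains from trade E[(b-s)·1[b > s]]. -/
open MeasureTheory

section Aux

variable (μ : Measure ℝ) [IsProbabilityMeasure μ]

private lemma mp_swap23' :
    MeasurePreserving (fun x : ℝ × ℝ × ℝ => (x.1, x.2.2, x.2.1))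
      (μ.prod (μ.prod μ)) (μ.prod (μ.prod μ)) :=
  (MeasurePreserving.id μ).prod Measure.measurePreserving_swap

private lemma mp_swap12' :
    MeasurePreserving (fun x : ℝ × ℝ × ℝ => (x.2.1, x.1, x.2.2))
      (μ.prod (μ.prod μ)) (μ.prod (μ.prod μ)) := by
  have h1 : MeasurePreserving (MeasurableEquiv.prodAssoc.symm : ℝ × ℝ × ℝ ≃ᵐ (ℝ × ℝ) × ℝ)
      (μ.prod (μ.prod μ)) ((μ.prod μ).prod μ) :=
    (measurePreserving_prodAssoc μ μ μ).symm _
  have h2 : MeasurePreserving (Prod.map Prod.swap (id : ℝ → ℝ))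
      ((μ.prod μ).prod μ) ((μ.prod μ).prod μ) :=
    Measure.measurePreserving_swap.prod (MeasurePreserving.id μ)
  have h3 := measurePreserving_prodAssoc μ μ μ
  exact h3.comp (h2.comp h1)

private lemma mp_cycle' :
    MeasurePreserving (fun x : ℝ × ℝ × ℝ => (x.2.1, x.2.2, x.1))
      (μ.prod (μ.prod μ)) (μ.prod (μ.prod μ)) :=
  (mp_swap23' μ).comp (mp_swap12' μ)

private lemma mp_swap13' :
    MeasurePreserving (fun x : ℝ × ℝ × ℝ => (x.2.2, x.2.1, x.1))
      (μ.prod (μ.prod μ)) (μ.prod (μ.prod μ)) :=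
  (mp_swap12' μ).comp (mp_cycle' μ)

private lemma mp_proj' :
    MeasurePreserving (fun x : ℝ × ℝ × ℝ => (x.1, x.2.1)) (μ.prod (μ.prod μ)) (μ.prod μ) :=
  (MeasurePreserving.id μ).prod ⟨measurable_fst, by simp⟩

private lemma integral_perm' {f : ℝ × ℝ × ℝ → ℝ × ℝ × ℝ}
    (hf : MeasurePreserving f (μ.prod (μ.prod μ)) (μ.prod (μ.prod μ)))
    {g : ℝ × ℝ × ℝ → ℝ} (hg : AEStronglyMeasurable g (μ.prod (μ.prod μ))) :
    ∫ x, g x ∂(μ.prod (μ.prod μ)) = ∫ x, g (f x) ∂(μ.prod (μ.prod μ)) := by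
  conv_lhs => rw [← hf.map_eq]
  exact integral_map hf.measurable.aemeasurable (by rwa [hf.map_eq])

private lemma tri_aux (b s p : ℝ) (h1 : b ≠ p) (h2 : p ≠ s) :
    (if b > s then b - s else 0)
      = ((if b > p ∧ p > s then b - s else 0) + (if p > b ∧ b > s then b - s else 0))
        + (if b > s ∧ s > p then b - s else 0) := by
  rcases h1.lt_or_gt with h | h <;> rcases h2.lt_or_gt with h' | h' <;>
    rcases lt_trichotomy b s with h'' | h'' | h'' <;>
    try subst h''
  all_goals
    first
      | (simp [gt_iff_lt, h, h', h'', lt_asymm h, lt_asymm h', lt_asymm h'',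
          lt_irrefl, lt_trans h h', lt_trans h' h, lt_asymm (lt_trans h h'),
          lt_asymm (lt_trans h' h)] <;> first | ring1 | linarith)
      | (simp [gt_iff_lt, h, h', lt_asymm h, lt_asymm h', lt_irrefl,
          lt_trans h h', lt_trans h' h, lt_asymm (lt_trans h h'),
          lt_asymm (lt_trans h' h)] <;> first | ring1 | linarith)
      | (simp [gt_iff_lt, h, h', h'', lt_asymm h, lt_asymm h', lt_asymm h'',
          lt_irrefl] <;> first | ring1 | linarith)
      | (simp [gt_iff_lt, h, h', lt_asymm h, lt_asymm h', lt_irrefl] <;>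
          first | ring1 | linarith)

end Aux

/-- For `b, s, p` i.i.d. from an atomless probability distribution `μ` with finite expectation
(coordinates: `x.1 = b`, `x.2.1 = s`, `x.2.2 = p`):
`E[(b-s)·1[b ≥ p ≥ s]] = E[(b-s)·1[p > b > s]] + E[(b-s)·1[b > s > p]]`, and consequently
pricing at the sample `p` obtains exactly half of `E[(b-s)·1[b > s]]`. -/
theorem sample_pricing_iid_exactly_half (μ : Measure ℝ) [IsProbabilityMeasure μ]
    (hatomless : ∀ x : ℝ, μ {x} = 0) (hint : Integrable (fun x : ℝ => x) μ) :
    ((∫ x : ℝ × ℝ × ℝ, (if x.1 ≥ x.2.2 ∧ x.2.2 ≥ x.2.1 then x.1 - x.2.1 else 0)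
        ∂(μ.prod (μ.prod μ)))
      = (∫ x : ℝ × ℝ × ℝ, (if x.2.2 > x.1 ∧ x.1 > x.2.1 then x.1 - x.2.1 else 0)
          ∂(μ.prod (μ.prod μ)))
        + (∫ x : ℝ × ℝ × ℝ, (if x.1 > x.2.1 ∧ x.2.1 > x.2.2 then x.1 - x.2.1 else 0)
            ∂(μ.prod (μ.prod μ))))
    ∧ ((∫ x : ℝ × ℝ × ℝ, (if x.1 ≥ x.2.2 ∧ x.2.2 ≥ x.2.1 then x.1 - x.2.1 else 0)
          ∂(μ.prod (μ.prod μ)))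
        = (1 / 2) * ∫ x : ℝ × ℝ, (if x.1 > x.2 then x.1 - x.2 else 0) ∂(μ.prod μ)) := by
  have m1 : Measurable (fun x : ℝ × ℝ × ℝ => x.1) := measurable_fst
  have m2 : Measurable (fun x : ℝ × ℝ × ℝ => x.2.1) := measurable_fst.comp measurable_snd
  have m3 : Measurable (fun x : ℝ × ℝ × ℝ => x.2.2) := measurable_snd.comp measurable_snd
  -- measurability of the integrands
  have smT : AEStronglyMeasurable
      (fun x : ℝ × ℝ × ℝ => if x.1 > x.2.2 ∧ x.2.2 > x.2.1 then x.1 - x.2.1 else 0)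
      (μ.prod (μ.prod μ)) :=
    (Measurable.ite ((measurableSet_lt m3 m1).inter (measurableSet_lt m2 m3))
      (m1.sub m2) measurable_const).aestronglyMeasurable
  have smA : AEStronglyMeasurable
      (fun x : ℝ × ℝ × ℝ => if x.2.2 > x.1 ∧ x.1 > x.2.1 then x.1 - x.2.1 else 0)
      (μ.prod (μ.prod μ)) :=
    (Measurable.ite ((measurableSet_lt m1 m3).inter (measurableSet_lt m2 m1))
      (m1.sub m2) measurable_const).aestronglyMeasurable
  have smB : AEStronglyMeasurable
      (fun x : ℝ × ℝ × ℝ => if x.1 > x.2.1 ∧ x.2.1 > x.2.2 then x.1 - x.2.1 else 0)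
      (μ.prod (μ.prod μ)) :=
    (Measurable.ite ((measurableSet_lt m2 m1).inter (measurableSet_lt m3 m2))
      (m1.sub m2) measurable_const).aestronglyMeasurable
  have smH : AEStronglyMeasurable
      (fun x : ℝ × ℝ × ℝ => if x.2.2 > x.1 ∧ x.1 > x.2.1 then x.2.2 - x.1 else 0)
      (μ.prod (μ.prod μ)) :=
    (Measurable.ite ((measurableSet_lt m1 m3).inter (measurableSet_lt m2 m1))
      (m3.sub m1) measurable_const).aestronglyMeasurable
  have smG : AEStronglyMeasurable
      (fun x : ℝ × ℝ × ℝ => if x.1 > x.2.1 then x.1 - x.2.1 else 0)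
      (μ.prod (μ.prod μ)) :=
    (Measurable.ite (measurableSet_lt m2 m1) (m1.sub m2) measurable_const).aestronglyMeasurable
  have smGe : AEStronglyMeasurable
      (fun x : ℝ × ℝ × ℝ => if x.1 ≥ x.2.2 ∧ x.2.2 ≥ x.2.1 then x.1 - x.2.1 else 0)
      (μ.prod (μ.prod μ)) :=
    (Measurable.ite ((measurableSet_le m3 m1).inter (measurableSet_le m2 m3))
      (m1.sub m2) measurable_const).aestronglyMeasurable
  have sm2 : AEStronglyMeasurable
      (fun y : ℝ × ℝ => if y.1 > y.2 then y.1 - y.2 else 0) (μ.prod μ) :=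
    (Measurable.ite (measurableSet_lt measurable_snd measurable_fst)
      (measurable_fst.sub measurable_snd) measurable_const).aestronglyMeasurable
  -- integrability from the bound |·| ≤ |b| + |s| + |p|
  have psnd : MeasurePreserving (Prod.snd : ℝ × (ℝ × ℝ) → ℝ × ℝ)
      (μ.prod (μ.prod μ)) (μ.prod μ) := ⟨measurable_snd, by simp⟩
  have i1 : Integrable (fun x : ℝ × ℝ × ℝ => x.1) (μ.prod (μ.prod μ)) := by
    have h : MeasurePreserving (Prod.fst : ℝ × (ℝ × ℝ) → ℝ) (μ.prod (μ.prod μ)) μ :=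
      ⟨measurable_fst, by simp⟩
    exact (h.integrable_comp hint.aestronglyMeasurable).mpr hint
  have i2 : Integrable (fun x : ℝ × ℝ × ℝ => x.2.1) (μ.prod (μ.prod μ)) := by
    have h : MeasurePreserving (Prod.fst : ℝ × ℝ → ℝ) (μ.prod μ) μ := ⟨measurable_fst, by simp⟩
    exact ((h.comp psnd).integrable_comp hint.aestronglyMeasurable).mpr hint
  have i3 : Integrable (fun x : ℝ × ℝ × ℝ => x.2.2) (μ.prod (μ.prod μ)) := by
    have h : MeasurePreserving (Prod.snd : ℝ × ℝ → ℝ) (μ.prod μ) μ := ⟨measurable_snd, by simp⟩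
    exact ((h.comp psnd).integrable_comp hint.aestronglyMeasurable).mpr hint
  have ibound : Integrable (fun x : ℝ × ℝ × ℝ => |x.1| + |x.2.1| + |x.2.2|)
      (μ.prod (μ.prod μ)) := (i1.abs.add i2.abs).add i3.abs
  have integ : ∀ g : ℝ × ℝ × ℝ → ℝ, AEStronglyMeasurable g (μ.prod (μ.prod μ)) →
      (∀ x, |g x| ≤ |x.1| + |x.2.1| + |x.2.2|) → Integrable g (μ.prod (μ.prod μ)) := by
    intro g hg hb
    exact Integrable.mono' ibound hg (Filter.Eventually.of_forall fun x => by
      simpa [Real.norm_eq_abs] using hb x)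
  have bnd : ∀ (a b c : ℝ) (P : Prop) [Decidable P],
      |if P then a - b else 0| ≤ |a| + |b| + |c| := by
    intro a b c P _
    split_ifs with h
    · have h1 := abs_sub a b
      have := abs_nonneg c
      linarith
    · simp only [abs_zero]
      have := abs_nonneg a
      have := abs_nonneg b
      have := abs_nonneg c
      linarith
  have iT : Integrable
      (fun x : ℝ × ℝ × ℝ => if x.1 > x.2.2 ∧ x.2.2 > x.2.1 then x.1 - x.2.1 else 0)
      (μ.prod (μ.prod μ)) := integ _ smT fun x => bnd x.1 x.2.1 x.2.2 _
  have iA : Integrable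
      (fun x : ℝ × ℝ × ℝ => if x.2.2 > x.1 ∧ x.1 > x.2.1 then x.1 - x.2.1 else 0)
      (μ.prod (μ.prod μ)) := integ _ smA fun x => bnd x.1 x.2.1 x.2.2 _
  have iB : Integrable
      (fun x : ℝ × ℝ × ℝ => if x.1 > x.2.1 ∧ x.2.1 > x.2.2 then x.1 - x.2.1 else 0)
      (μ.prod (μ.prod μ)) := integ _ smB fun x => bnd x.1 x.2.1 x.2.2 _
  have iH : Integrable
      (fun x : ℝ × ℝ × ℝ => if x.2.2 > x.1 ∧ x.1 > x.2.1 then x.2.2 - x.1 else 0)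
      (μ.prod (μ.prod μ)) := integ _ smH fun x => by
        have h := bnd x.2.2 x.1 x.2.1 (x.2.2 > x.1 ∧ x.1 > x.2.1)
        calc |if x.2.2 > x.1 ∧ x.1 > x.2.1 then x.2.2 - x.1 else 0|
            ≤ |x.2.2| + |x.1| + |x.2.1| := h
          _ = |x.1| + |x.2.1| + |x.2.2| := by ring
  -- null tie sets
  have h2b : ∀ b : ℝ, (μ.prod μ) {y : ℝ × ℝ | b = y.2} = 0 := by
    intro b
    rw [Measure.measure_prod_null (measurableSet_eq_fun measurable_const measurable_snd)]
    refine Filter.Eventually.of_forall fun s => ?_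
    show μ (Prod.mk s ⁻¹' {y : ℝ × ℝ | b = y.2}) = 0
    have : (Prod.mk s ⁻¹' {y : ℝ × ℝ | b = y.2}) = {b} := by ext p; simp [eq_comm]
    rw [this]; exact hatomless b
  have h2c : (μ.prod μ) {y : ℝ × ℝ | y.2 = y.1} = 0 := by
    rw [Measure.measure_prod_null (measurableSet_eq_fun measurable_snd measurable_fst)]
    refine Filter.Eventually.of_forall fun s => ?_
    show μ (Prod.mk s ⁻¹' {y : ℝ × ℝ | y.2 = y.1}) = 0
    have : (Prod.mk s ⁻¹' {y : ℝ × ℝ | y.2 = y.1}) = {s} := by ext p; simp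
    rw [this]; exact hatomless s
  have hbp : (μ.prod (μ.prod μ)) {x : ℝ × ℝ × ℝ | x.1 = x.2.2} = 0 := by
    rw [Measure.measure_prod_null (measurableSet_eq_fun m1 m3)]
    exact Filter.Eventually.of_forall fun b => h2b b
  have hps : (μ.prod (μ.prod μ)) {x : ℝ × ℝ × ℝ | x.2.2 = x.2.1} = 0 := by
    rw [Measure.measure_prod_null (measurableSet_eq_fun m3 m2)]
    exact Filter.Eventually.of_forall fun b => h2c
  have aebp : ∀ᵐ x ∂(μ.prod (μ.prod μ)), ¬ (x.1 = x.2.2) := by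
    rw [ae_iff]; simpa using hbp
  have aeps : ∀ᵐ x ∂(μ.prod (μ.prod μ)), ¬ (x.2.2 = x.2.1) := by
    rw [ae_iff]; simpa using hps
  -- the ≥ integrand equals the strict one a.e.
  have keyGe : (∫ x : ℝ × ℝ × ℝ, (if x.1 ≥ x.2.2 ∧ x.2.2 ≥ x.2.1 then x.1 - x.2.1 else 0)
        ∂(μ.prod (μ.prod μ)))
      = ∫ x : ℝ × ℝ × ℝ, (if x.1 > x.2.2 ∧ x.2.2 > x.2.1 then x.1 - x.2.1 else 0)
        ∂(μ.prod (μ.prod μ)) := by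
    refine integral_congr_ae ?_
    filter_upwards [aebp, aeps] with x hx1 hx2
    have hiff : (x.1 ≥ x.2.2 ∧ x.2.2 ≥ x.2.1) ↔ (x.1 > x.2.2 ∧ x.2.2 > x.2.1) := by
      constructor
      · rintro ⟨h1, h2⟩
        exact ⟨lt_of_le_of_ne h1 (fun h => hx1 h.symm), lt_of_le_of_ne h2 (fun h => hx2 h.symm)⟩
      · rintro ⟨h1, h2⟩; exact ⟨le_of_lt h1, le_of_lt h2⟩
    exact if_congr hiff rfl rfl
  -- T = A + B via exchangeability
  have key1 : (∫ x : ℝ × ℝ × ℝ, (if x.1 > x.2.2 ∧ x.2.2 > x.2.1 then x.1 - x.2.1 else 0)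
        ∂(μ.prod (μ.prod μ)))
      = (∫ x : ℝ × ℝ × ℝ, (if x.2.2 > x.1 ∧ x.1 > x.2.1 then x.1 - x.2.1 else 0)
          ∂(μ.prod (μ.prod μ)))
        + (∫ x : ℝ × ℝ × ℝ, (if x.1 > x.2.1 ∧ x.2.1 > x.2.2 then x.1 - x.2.1 else 0)
            ∂(μ.prod (μ.prod μ))) := by
    have e1 : (∫ x : ℝ × ℝ × ℝ, (if x.1 > x.2.2 ∧ x.2.2 > x.2.1 then x.1 - x.2.1 else 0)
          ∂(μ.prod (μ.prod μ)))
        = ∫ x : ℝ × ℝ × ℝ, (if x.2.2 > x.1 ∧ x.1 > x.2.1 then x.2.2 - x.2.1 else 0)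
          ∂(μ.prod (μ.prod μ)) :=
      integral_perm' μ (mp_swap13' μ) smT
    have e2 : (∫ x : ℝ × ℝ × ℝ, (if x.2.2 > x.1 ∧ x.1 > x.2.1 then x.2.2 - x.2.1 else 0)
          ∂(μ.prod (μ.prod μ)))
        = (∫ x : ℝ × ℝ × ℝ, (if x.2.2 > x.1 ∧ x.1 > x.2.1 then x.2.2 - x.1 else 0)
            ∂(μ.prod (μ.prod μ)))
          + (∫ x : ℝ × ℝ × ℝ, (if x.2.2 > x.1 ∧ x.1 > x.2.1 then x.1 - x.2.1 else 0)
              ∂(μ.prod (μ.prod μ))) := by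
      rw [← integral_add iH iA]
      refine integral_congr_ae (Filter.Eventually.of_forall fun x => ?_)
      by_cases h : x.2.2 > x.1 ∧ x.1 > x.2.1 <;> simp [h] <;> ring
    have e3 : (∫ x : ℝ × ℝ × ℝ, (if x.2.2 > x.1 ∧ x.1 > x.2.1 then x.2.2 - x.1 else 0)
          ∂(μ.prod (μ.prod μ)))
        = ∫ x : ℝ × ℝ × ℝ, (if x.1 > x.2.1 ∧ x.2.1 > x.2.2 then x.1 - x.2.1 else 0)
          ∂(μ.prod (μ.prod μ)) :=
      integral_perm' μ (mp_cycle' μ) smH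
    rw [e1, e2, e3]; ring
  -- decomposition of the full gains from trade
  have keyG : (∫ x : ℝ × ℝ × ℝ, (if x.1 > x.2.1 then x.1 - x.2.1 else 0) ∂(μ.prod (μ.prod μ)))
      = (∫ x : ℝ × ℝ × ℝ, (if x.1 > x.2.2 ∧ x.2.2 > x.2.1 then x.1 - x.2.1 else 0)
          ∂(μ.prod (μ.prod μ)))
        + (∫ x : ℝ × ℝ × ℝ, (if x.2.2 > x.1 ∧ x.1 > x.2.1 then x.1 - x.2.1 else 0)
            ∂(μ.prod (μ.prod μ)))
        + (∫ x : ℝ × ℝ × ℝ, (if x.1 > x.2.1 ∧ x.2.1 > x.2.2 then x.1 - x.2.1 else 0)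
            ∂(μ.prod (μ.prod μ))) := by
    have hsum : (∫ x : ℝ × ℝ × ℝ,
        ((if x.1 > x.2.2 ∧ x.2.2 > x.2.1 then x.1 - x.2.1 else 0)
          + (if x.2.2 > x.1 ∧ x.1 > x.2.1 then x.1 - x.2.1 else 0)
          + (if x.1 > x.2.1 ∧ x.2.1 > x.2.2 then x.1 - x.2.1 else 0)) ∂(μ.prod (μ.prod μ)))
        = (∫ x : ℝ × ℝ × ℝ, (if x.1 > x.2.2 ∧ x.2.2 > x.2.1 then x.1 - x.2.1 else 0)
            ∂(μ.prod (μ.prod μ)))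
          + (∫ x : ℝ × ℝ × ℝ, (if x.2.2 > x.1 ∧ x.1 > x.2.1 then x.1 - x.2.1 else 0)
              ∂(μ.prod (μ.prod μ)))
          + (∫ x : ℝ × ℝ × ℝ, (if x.1 > x.2.1 ∧ x.2.1 > x.2.2 then x.1 - x.2.1 else 0)
              ∂(μ.prod (μ.prod μ))) := by
      have h1' := integral_add (iT.add iA) iB
      simp only [Pi.add_apply] at h1'
      rw [h1', integral_add iT iA]
    rw [← hsum]
    refine integral_congr_ae ?_
    filter_upwards [aebp, aeps] with x hx1 hx2
    exact tri_aux x.1 x.2.1 x.2.2 hx1 hx2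
  -- the 2-variable integral equals the 3-variable one
  have projEq : (∫ y : ℝ × ℝ, (if y.1 > y.2 then y.1 - y.2 else 0) ∂(μ.prod μ))
      = ∫ x : ℝ × ℝ × ℝ, (if x.1 > x.2.1 then x.1 - x.2.1 else 0) ∂(μ.prod (μ.prod μ)) := by
    conv_lhs => rw [← (mp_proj' μ).map_eq]
    exact integral_map (mp_proj' μ).measurable.aemeasurable (by rwa [(mp_proj' μ).map_eq])
  constructor
  · exact keyGe.trans key1
  · rw [keyGe, projEq]
    linarith [key1, keyG]
end

section
/- Let b, s, p be random variables obtained as follows: draw three i.i.d. uniform quantiles q₁, q₂, q₃ in (0,1), apply a monotone map v_B to one of them (chosen uniformly) to get b, v_S to another to get s, and v_B to the remaining one to get p, where v_B(q) ≥ v_S(q) for all q (first-order stochastic dominance). Then E[(b-s)·1[p > b > s]] ≤ E[(b-s)·1[b ≥ p ≥ s]]. -/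
open MeasureTheory

lemma map_eval_pi_fin3 (μ : Measure ℝ) [IsProbabilityMeasure μ] (i : Fin 3) :
    (Measure.pi fun _ : Fin 3 => μ).map (fun q => q i) = μ := by
  ext s hs
  rw [Measure.map_apply (measurable_pi_apply i) hs]
  have h : (fun q : Fin 3 → ℝ => q i) ⁻¹' s =
      Set.pi Set.univ (Function.update (fun _ : Fin 3 => Set.univ) i s) := by
    rw [← Set.eval_preimage]
  rw [h, Measure.pi_pi]
  rw [Finset.prod_eq_single i (fun j _ hj => by
      rw [Function.update_of_ne hj]; exact measure_univ) (by simp)]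
  rw [Function.update_self]

lemma comp_eval_integrable (μ : Measure ℝ) [IsProbabilityMeasure μ] (f : ℝ → ℝ)
    (hf : Measurable f) (hI : Integrable f μ) (i : Fin 3) :
    Integrable (fun q : Fin 3 → ℝ => f (q i)) (Measure.pi fun _ : Fin 3 => μ) := by
  have h := integrable_map_measure (μ := Measure.pi fun _ : Fin 3 => μ)
    (f := fun q : Fin 3 → ℝ => q i) (g := f) ?_ (measurable_pi_apply i).aemeasurable
  · rw [map_eval_pi_fin3 μ i] at h
    exact h.mp hI
  · rw [map_eval_pi_fin3 μ i]
    exact hf.aestronglyMeasurable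

/-- Quantile coupling under FSD: draw three i.i.d. uniform quantiles `q : Fin 3 → ℝ` on `(0,1)`
and a uniformly random permutation `σ` assigning roles; set `b = v_B (q (σ 0))`,
`s = v_S (q (σ 1))`, `p = v_B (q (σ 2))`, where `v_B, v_S` are nondecreasing with
`v_S ≤ v_B` pointwise.  Then `E[(b-s)·1[p > b > s]] ≤ E[(b-s)·1[b ≥ p ≥ s]]`. -/
theorem sample_pricing_fsd_ineq_one (vB vS : ℝ → ℝ) (hB : Monotone vB) (hS : Monotone vS)
    (hdom : ∀ x : ℝ, vS x ≤ vB x)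
    (hIB : Integrable vB ((volume : Measure ℝ).restrict (Set.Ioo 0 1)))
    (hIS : Integrable vS ((volume : Measure ℝ).restrict (Set.Ioo 0 1))) :
    (1 / 6 : ℝ) * ∑ σ : Equiv.Perm (Fin 3),
        ∫ q : Fin 3 → ℝ,
          (if vB (q (σ 2)) > vB (q (σ 0)) ∧ vB (q (σ 0)) > vS (q (σ 1))
            then vB (q (σ 0)) - vS (q (σ 1)) else 0)
          ∂(Measure.pi fun _ => (volume : Measure ℝ).restrict (Set.Ioo 0 1))
      ≤ (1 / 6 : ℝ) * ∑ σ : Equiv.Perm (Fin 3),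
          ∫ q : Fin 3 → ℝ,
            (if vB (q (σ 0)) ≥ vB (q (σ 2)) ∧ vB (q (σ 2)) ≥ vS (q (σ 1))
              then vB (q (σ 0)) - vS (q (σ 1)) else 0)
            ∂(Measure.pi fun _ => (volume : Measure ℝ).restrict (Set.Ioo 0 1)) := by
  set μ : Measure ℝ := (volume : Measure ℝ).restrict (Set.Ioo 0 1) with hμ
  have : IsProbabilityMeasure μ := by
    constructor
    simp [hμ, Real.volume_Ioo]
  set π : Measure (Fin 3 → ℝ) := Measure.pi fun _ => μ with hπ
  have hBm : Measurable vB := hB.measurable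
  have hSm : Measurable vS := hS.measurable
  -- integrands
  set F : Equiv.Perm (Fin 3) → (Fin 3 → ℝ) → ℝ := fun σ q =>
    if vB (q (σ 2)) > vB (q (σ 0)) ∧ vB (q (σ 0)) > vS (q (σ 1))
      then vB (q (σ 0)) - vS (q (σ 1)) else 0 with hF
  set G : Equiv.Perm (Fin 3) → (Fin 3 → ℝ) → ℝ := fun σ q =>
    if vB (q (σ 0)) ≥ vB (q (σ 2)) ∧ vB (q (σ 2)) ≥ vS (q (σ 1))
      then vB (q (σ 0)) - vS (q (σ 1)) else 0 with hG
  have measF : ∀ σ, Measurable (F σ) := by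
    intro σ
    apply Measurable.ite _ (((hBm.comp (measurable_pi_apply _)).sub
      (hSm.comp (measurable_pi_apply _)))) measurable_const
    exact MeasurableSet.inter
      (measurableSet_lt (hBm.comp (measurable_pi_apply _)) (hBm.comp (measurable_pi_apply _)))
      (measurableSet_lt (hSm.comp (measurable_pi_apply _)) (hBm.comp (measurable_pi_apply _)))
  have measG : ∀ σ, Measurable (G σ) := by
    intro σ
    apply Measurable.ite _ (((hBm.comp (measurable_pi_apply _)).sub
      (hSm.comp (measurable_pi_apply _)))) measurable_const
    exact MeasurableSet.inter
      (measurableSet_le (hBm.comp (measurable_pi_apply _)) (hBm.comp (measurable_pi_apply _)))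
      (measurableSet_le (hSm.comp (measurable_pi_apply _)) (hBm.comp (measurable_pi_apply _)))
  have hbound : ∀ (i j : Fin 3), Integrable
      (fun q : Fin 3 → ℝ => |vB (q i)| + |vS (q j)|) π := by
    intro i j
    exact ((comp_eval_integrable μ vB hBm hIB i).abs).add
      ((comp_eval_integrable μ vS hSm hIS j).abs)
  have intF : ∀ σ, Integrable (F σ) π := by
    intro σ
    refine Integrable.mono' (hbound (σ 0) (σ 1)) ((measF σ).aestronglyMeasurable)
      (Filter.Eventually.of_forall fun q => ?_)
    by_cases h : vB (q (σ 2)) > vB (q (σ 0)) ∧ vB (q (σ 0)) > vS (q (σ 1))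
    · simp only [hF, if_pos h, Real.norm_eq_abs]
      exact abs_sub _ _
    · simp only [hF, if_neg h, norm_zero]
      positivity
  have intG : ∀ σ, Integrable (G σ) π := by
    intro σ
    refine Integrable.mono' (hbound (σ 0) (σ 1)) ((measG σ).aestronglyMeasurable)
      (Filter.Eventually.of_forall fun q => ?_)
    by_cases h : vB (q (σ 0)) ≥ vB (q (σ 2)) ∧ vB (q (σ 2)) ≥ vS (q (σ 1))
    · simp only [hG, if_pos h, Real.norm_eq_abs]
      exact abs_sub _ _
    · simp only [hG, if_neg h, norm_zero]
      positivity
  -- key pointwise inequality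
  set c : Equiv.Perm (Fin 3) := Equiv.swap 0 2 with hc
  have key : ∀ σ : Equiv.Perm (Fin 3), ∀ q : Fin 3 → ℝ, F σ q ≤ G (σ * c) q := by
    intro σ q
    have h0 : (σ * c) 0 = σ 2 := by simp [hc, Equiv.Perm.mul_apply]
    have h1 : (σ * c) 1 = σ 1 := by simp [hc, Equiv.Perm.mul_apply, Equiv.swap_apply_of_ne_of_ne]
    have h2 : (σ * c) 2 = σ 0 := by simp [hc, Equiv.Perm.mul_apply]
    simp only [hF, hG, h0, h1, h2]
    by_cases h : vB (q (σ 2)) > vB (q (σ 0)) ∧ vB (q (σ 0)) > vS (q (σ 1))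
    · rw [if_pos h, if_pos ⟨le_of_lt h.1, le_of_lt h.2⟩]
      linarith [h.1]
    · rw [if_neg h]
      by_cases h' : vB (q (σ 2)) ≥ vB (q (σ 0)) ∧ vB (q (σ 0)) ≥ vS (q (σ 1))
      · rw [if_pos h']; linarith [h'.1, h'.2]
      · rw [if_neg h']
  have step : ∀ σ : Equiv.Perm (Fin 3), ∫ q, F σ q ∂π ≤ ∫ q, G (σ * c) q ∂π := by
    intro σ
    exact integral_mono (intF σ) (intG _) (key σ)
  have sum_le : ∑ σ : Equiv.Perm (Fin 3), ∫ q, F σ q ∂π ≤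
      ∑ σ : Equiv.Perm (Fin 3), ∫ q, G σ q ∂π := by
    calc ∑ σ : Equiv.Perm (Fin 3), ∫ q, F σ q ∂π
        ≤ ∑ σ : Equiv.Perm (Fin 3), ∫ q, G (σ * c) q ∂π :=
          Finset.sum_le_sum fun σ _ => step σ
      _ = ∑ σ : Equiv.Perm (Fin 3), ∫ q, G σ q ∂π :=
          Fintype.sum_equiv (Equiv.mulRight c) _ _ (fun σ => rfl)
  have h6 : (0:ℝ) < 1/6 := by norm_num
  exact mul_le_mul_of_nonneg_left sum_le (le_of_lt h6)
end

section
/- Under the same quantile coupling (three i.i.d. uniform quantiles, uniformly permuted roles, with v_B ≥ v_S pointwise), E[(b-s)·1[b > s > p]] ≤ E[(b-s)·1[b ≥ p ≥ s]] + E[(b-s)·1[p > b > s]]. -/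
open MeasureTheory

section SP2Aux

lemma sp2_prob : IsProbabilityMeasure ((volume : Measure ℝ).restrict (Set.Ioo 0 1)) := by
  constructor
  simp [Real.volume_Ioo]

lemma sp2_map_eval (a : Fin 3) :
    (Measure.pi fun _ : Fin 3 => (volume : Measure ℝ).restrict (Set.Ioo 0 1)).map
      (fun q => q a) = (volume : Measure ℝ).restrict (Set.Ioo 0 1) := by
  haveI : ∀ i : Fin 3,
      IsProbabilityMeasure ((fun _ : Fin 3 => (volume : Measure ℝ).restrict (Set.Ioo 0 1)) i) :=
    fun _ => sp2_prob
  ext s hs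
  rw [Measure.map_apply (measurable_pi_apply a) hs]
  have h1 : (fun q : Fin 3 → ℝ => q a) ⁻¹' s
      = Set.pi Set.univ (Function.update (fun _ : Fin 3 => (Set.univ : Set ℝ)) a s) :=
    Set.eval_preimage
  rw [h1, Measure.pi_pi, Finset.prod_eq_single a]
  · simp
  · intro i _ hia
    simp [Function.update_of_ne hia]
  · simp

lemma sp2_integrable_eval {v : ℝ → ℝ}
    (hI : Integrable v ((volume : Measure ℝ).restrict (Set.Ioo 0 1))) (a : Fin 3) :
    Integrable (fun q : Fin 3 → ℝ => v (q a))
      (Measure.pi fun _ : Fin 3 => (volume : Measure ℝ).restrict (Set.Ioo 0 1)) := by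
  have hmp : MeasurePreserving (fun q : Fin 3 → ℝ => q a)
      (Measure.pi fun _ : Fin 3 => (volume : Measure ℝ).restrict (Set.Ioo 0 1))
      ((volume : Measure ℝ).restrict (Set.Ioo 0 1)) :=
    ⟨measurable_pi_apply a, sp2_map_eval a⟩
  exact (hmp.integrable_comp hI.aestronglyMeasurable).mpr hI

/-- The three integrand families. -/
noncomputable def sp2f1 (vB vS : ℝ → ℝ) (σ : Equiv.Perm (Fin 3)) (q : Fin 3 → ℝ) : ℝ :=
  if vB (q (σ 0)) > vS (q (σ 1)) ∧ vS (q (σ 1)) > vB (q (σ 2))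
    then vB (q (σ 0)) - vS (q (σ 1)) else 0

noncomputable def sp2f2 (vB vS : ℝ → ℝ) (σ : Equiv.Perm (Fin 3)) (q : Fin 3 → ℝ) : ℝ :=
  if vB (q (σ 0)) ≥ vB (q (σ 2)) ∧ vB (q (σ 2)) ≥ vS (q (σ 1))
    then vB (q (σ 0)) - vS (q (σ 1)) else 0

noncomputable def sp2f3 (vB vS : ℝ → ℝ) (σ : Equiv.Perm (Fin 3)) (q : Fin 3 → ℝ) : ℝ :=
  if vB (q (σ 2)) > vB (q (σ 0)) ∧ vB (q (σ 0)) > vS (q (σ 1))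
    then vB (q (σ 0)) - vS (q (σ 1)) else 0

lemma sp2_swap_apply (σ : Equiv.Perm (Fin 3)) :
    (σ * Equiv.swap 1 2 : Equiv.Perm (Fin 3)) 0 = σ 0
      ∧ (σ * Equiv.swap 1 2 : Equiv.Perm (Fin 3)) 1 = σ 2
      ∧ (σ * Equiv.swap 1 2 : Equiv.Perm (Fin 3)) 2 = σ 1 := by
  refine ⟨?_, ?_, ?_⟩
  · rw [Equiv.Perm.mul_apply, Equiv.swap_apply_of_ne_of_ne (by decide) (by decide)]
  · rw [Equiv.Perm.mul_apply, Equiv.swap_apply_left]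
  · rw [Equiv.Perm.mul_apply, Equiv.swap_apply_right]

lemma sp2_pt {vB vS : ℝ → ℝ} (hdom : ∀ x : ℝ, vS x ≤ vB x)
    (σ : Equiv.Perm (Fin 3)) (q : Fin 3 → ℝ) :
    sp2f1 vB vS σ q ≤ sp2f2 vB vS (σ * Equiv.swap 1 2) q
      + sp2f3 vB vS (σ * Equiv.swap 1 2) q := by
  obtain ⟨e0, e1, e2⟩ := sp2_swap_apply σ
  unfold sp2f1 sp2f2 sp2f3
  rw [e0, e1, e2]
  have dj : vS (q (σ 1)) ≤ vB (q (σ 1)) := hdom _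
  have dk : vS (q (σ 2)) ≤ vB (q (σ 2)) := hdom _
  by_cases h1 : vB (q (σ 0)) > vS (q (σ 1)) ∧ vS (q (σ 1)) > vB (q (σ 2))
  · obtain ⟨hb, hsp⟩ := h1
    rw [if_pos ⟨hb, hsp⟩]
    rcases le_or_gt (vB (q (σ 1))) (vB (q (σ 0))) with hij | hij
    · rw [if_pos ⟨hij, by linarith⟩]
      have h3 : (0:ℝ) ≤ if vB (q (σ 1)) > vB (q (σ 0)) ∧ vB (q (σ 0)) > vS (q (σ 2))
          then vB (q (σ 0)) - vS (q (σ 2)) else 0 := by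
        split_ifs with h
        · linarith [h.2]
        · exact le_rfl
      linarith
    · rw [if_pos (show vB (q (σ 1)) > vB (q (σ 0)) ∧ vB (q (σ 0)) > vS (q (σ 2))
        from ⟨hij, by linarith⟩)]
      have h2 : (0:ℝ) ≤ if vB (q (σ 0)) ≥ vB (q (σ 1)) ∧ vB (q (σ 1)) ≥ vS (q (σ 2))
          then vB (q (σ 0)) - vS (q (σ 2)) else 0 := by
        split_ifs with h
        · linarith [h.1, h.2]
        · exact le_rfl
      linarith
  · rw [if_neg h1]
    have h2 : (0:ℝ) ≤ if vB (q (σ 0)) ≥ vB (q (σ 1)) ∧ vB (q (σ 1)) ≥ vS (q (σ 2))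
        then vB (q (σ 0)) - vS (q (σ 2)) else 0 := by
      split_ifs with h
      · linarith [h.1, h.2]
      · exact le_rfl
    have h3 : (0:ℝ) ≤ if vB (q (σ 1)) > vB (q (σ 0)) ∧ vB (q (σ 0)) > vS (q (σ 2))
        then vB (q (σ 0)) - vS (q (σ 2)) else 0 := by
      split_ifs with h
      · linarith [h.2]
      · exact le_rfl
    linarith

end SP2Aux

/-- Quantile coupling under FSD (same setup as inequality (1)): with `b = v_B (q (σ 0))`,
`s = v_S (q (σ 1))`, `p = v_B (q (σ 2))` for three i.i.d. uniform quantiles on `(0,1)` and a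
uniformly random permutation `σ`, and `v_B, v_S` nondecreasing with `v_S ≤ v_B` pointwise:
`E[(b-s)·1[b > s > p]] ≤ E[(b-s)·1[b ≥ p ≥ s]] + E[(b-s)·1[p > b > s]]`. -/
theorem sample_pricing_fsd_ineq_two (vB vS : ℝ → ℝ) (hB : Monotone vB) (hS : Monotone vS)
    (hdom : ∀ x : ℝ, vS x ≤ vB x)
    (hIB : Integrable vB ((volume : Measure ℝ).restrict (Set.Ioo 0 1)))
    (hIS : Integrable vS ((volume : Measure ℝ).restrict (Set.Ioo 0 1))) :
    (1 / 6 : ℝ) * ∑ σ : Equiv.Perm (Fin 3),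
        ∫ q : Fin 3 → ℝ,
          (if vB (q (σ 0)) > vS (q (σ 1)) ∧ vS (q (σ 1)) > vB (q (σ 2))
            then vB (q (σ 0)) - vS (q (σ 1)) else 0)
          ∂(Measure.pi fun _ => (volume : Measure ℝ).restrict (Set.Ioo 0 1))
      ≤ (1 / 6 : ℝ) * ∑ σ : Equiv.Perm (Fin 3),
          ∫ q : Fin 3 → ℝ,
            (if vB (q (σ 0)) ≥ vB (q (σ 2)) ∧ vB (q (σ 2)) ≥ vS (q (σ 1))
              then vB (q (σ 0)) - vS (q (σ 1)) else 0)
            ∂(Measure.pi fun _ => (volume : Measure ℝ).restrict (Set.Ioo 0 1))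
        + (1 / 6 : ℝ) * ∑ σ : Equiv.Perm (Fin 3),
            ∫ q : Fin 3 → ℝ,
              (if vB (q (σ 2)) > vB (q (σ 0)) ∧ vB (q (σ 0)) > vS (q (σ 1))
                then vB (q (σ 0)) - vS (q (σ 1)) else 0)
              ∂(Measure.pi fun _ => (volume : Measure ℝ).restrict (Set.Ioo 0 1)) := by
  have mB : Measurable vB := hB.measurable
  have mS : Measurable vS := hS.measurable
  have mev : ∀ (v : ℝ → ℝ), Measurable v → ∀ a : Fin 3,
      Measurable fun q : Fin 3 → ℝ => v (q a) :=
    fun v hv a => hv.comp (measurable_pi_apply a)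
  set μ := Measure.pi fun _ : Fin 3 => (volume : Measure ℝ).restrict (Set.Ioo 0 1) with hμ
  have hgint : ∀ a b : Fin 3,
      Integrable (fun q : Fin 3 → ℝ => vB (q a) - vS (q b)) μ :=
    fun a b => (sp2_integrable_eval hIB a).sub (sp2_integrable_eval hIS b)
  have hint1 : ∀ σ : Equiv.Perm (Fin 3), Integrable (sp2f1 vB vS σ) μ := by
    intro σ
    have hEq : sp2f1 vB vS σ
        = ({q : Fin 3 → ℝ | vS (q (σ 1)) < vB (q (σ 0))}
            ∩ {q : Fin 3 → ℝ | vB (q (σ 2)) < vS (q (σ 1))}).indicator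
          (fun q => vB (q (σ 0)) - vS (q (σ 1))) := by
      funext q
      unfold sp2f1
      by_cases h : vB (q (σ 0)) > vS (q (σ 1)) ∧ vS (q (σ 1)) > vB (q (σ 2))
      · simp [Set.indicator_apply, Set.mem_inter_iff, Set.mem_setOf_eq, h.1, h.2]
      · simp only [Set.indicator_apply, Set.mem_inter_iff, Set.mem_setOf_eq]
    rw [hEq]
    exact (hgint _ _).indicator
      ((measurableSet_lt (mev vS mS (σ 1)) (mev vB mB (σ 0))).inter
        (measurableSet_lt (mev vB mB (σ 2)) (mev vS mS (σ 1))))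
  have hint2 : ∀ σ : Equiv.Perm (Fin 3), Integrable (sp2f2 vB vS σ) μ := by
    intro σ
    have hEq : sp2f2 vB vS σ
        = ({q : Fin 3 → ℝ | vB (q (σ 2)) ≤ vB (q (σ 0))}
            ∩ {q : Fin 3 → ℝ | vS (q (σ 1)) ≤ vB (q (σ 2))}).indicator
          (fun q => vB (q (σ 0)) - vS (q (σ 1))) := by
      funext q
      unfold sp2f2
      by_cases h : vB (q (σ 0)) ≥ vB (q (σ 2)) ∧ vB (q (σ 2)) ≥ vS (q (σ 1))
      · simp [Set.indicator_apply, Set.mem_inter_iff, Set.mem_setOf_eq, h.1, h.2]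
      · simp only [Set.indicator_apply, Set.mem_inter_iff, Set.mem_setOf_eq]
    rw [hEq]
    exact (hgint _ _).indicator
      ((measurableSet_le (mev vB mB (σ 2)) (mev vB mB (σ 0))).inter
        (measurableSet_le (mev vS mS (σ 1)) (mev vB mB (σ 2))))
  have hint3 : ∀ σ : Equiv.Perm (Fin 3), Integrable (sp2f3 vB vS σ) μ := by
    intro σ
    have hEq : sp2f3 vB vS σ
        = ({q : Fin 3 → ℝ | vB (q (σ 0)) < vB (q (σ 2))}
            ∩ {q : Fin 3 → ℝ | vS (q (σ 1)) < vB (q (σ 0))}).indicator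
          (fun q => vB (q (σ 0)) - vS (q (σ 1))) := by
      funext q
      unfold sp2f3
      by_cases h : vB (q (σ 2)) > vB (q (σ 0)) ∧ vB (q (σ 0)) > vS (q (σ 1))
      · simp [Set.indicator_apply, Set.mem_inter_iff, Set.mem_setOf_eq, h.1, h.2]
      · simp only [Set.indicator_apply, Set.mem_inter_iff, Set.mem_setOf_eq]
    rw [hEq]
    exact (hgint _ _).indicator
      ((measurableSet_lt (mev vB mB (σ 0)) (mev vB mB (σ 2))).inter
        (measurableSet_lt (mev vS mS (σ 1)) (mev vB mB (σ 0))))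
  have key : ∀ σ : Equiv.Perm (Fin 3),
      ∫ q, sp2f1 vB vS σ q ∂μ
        ≤ (∫ q, sp2f2 vB vS (σ * Equiv.swap 1 2) q ∂μ)
          + ∫ q, sp2f3 vB vS (σ * Equiv.swap 1 2) q ∂μ := by
    intro σ
    rw [← integral_add (hint2 _) (hint3 _)]
    exact integral_mono (hint1 σ) ((hint2 _).add (hint3 _)) (sp2_pt hdom σ)
  have hsum : (∑ σ : Equiv.Perm (Fin 3), ∫ q, sp2f1 vB vS σ q ∂μ)
      ≤ (∑ σ : Equiv.Perm (Fin 3), ∫ q, sp2f2 vB vS σ q ∂μ)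
        + ∑ σ : Equiv.Perm (Fin 3), ∫ q, sp2f3 vB vS σ q ∂μ := by
    calc (∑ σ : Equiv.Perm (Fin 3), ∫ q, sp2f1 vB vS σ q ∂μ)
        ≤ ∑ σ : Equiv.Perm (Fin 3), ((∫ q, sp2f2 vB vS (σ * Equiv.swap 1 2) q ∂μ)
            + ∫ q, sp2f3 vB vS (σ * Equiv.swap 1 2) q ∂μ) :=
          Finset.sum_le_sum fun σ _ => key σ
      _ = (∑ σ : Equiv.Perm (Fin 3), ∫ q, sp2f2 vB vS (σ * Equiv.swap 1 2) q ∂μ)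
            + ∑ σ : Equiv.Perm (Fin 3), ∫ q, sp2f3 vB vS (σ * Equiv.swap 1 2) q ∂μ :=
          Finset.sum_add_distrib
      _ = (∑ σ : Equiv.Perm (Fin 3), ∫ q, sp2f2 vB vS σ q ∂μ)
            + ∑ σ : Equiv.Perm (Fin 3), ∫ q, sp2f3 vB vS σ q ∂μ := by
          rw [Fintype.sum_equiv (Equiv.mulRight (Equiv.swap 1 2))
              (fun σ => ∫ q, sp2f2 vB vS (σ * Equiv.swap 1 2) q ∂μ)
              (fun σ => ∫ q, sp2f2 vB vS σ q ∂μ) (fun σ => rfl),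
            Fintype.sum_equiv (Equiv.mulRight (Equiv.swap 1 2))
              (fun σ => ∫ q, sp2f3 vB vS (σ * Equiv.swap 1 2) q ∂μ)
              (fun σ => ∫ q, sp2f3 vB vS σ q ∂μ) (fun σ => rfl)]
  show (1 / 6 : ℝ) * (∑ σ : Equiv.Perm (Fin 3), ∫ q, sp2f1 vB vS σ q ∂μ)
      ≤ (1 / 6 : ℝ) * (∑ σ : Equiv.Perm (Fin 3), ∫ q, sp2f2 vB vS σ q ∂μ)
        + (1 / 6 : ℝ) * ∑ σ : Equiv.Perm (Fin 3), ∫ q, sp2f3 vB vS σ q ∂μ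
  rw [← mul_add]
  exact mul_le_mul_of_nonneg_left hsum (by norm_num)
end

section
/- Let b, s be independent with the buyer distribution F_B first-order stochastically dominating the seller distribution F_S, and let p be an independent fresh sample from F_B. Then E[(b-s)·1[b ≥ p ≥ s]] ≥ (1/4)·E[(b-s)·1[b > s]]. -/
/-! Symmetrization. Write `b = vB q₀`, `s = vS q₁`, `p = vB q₂`. On the event `q₁ ≤ q₂` we have
`s ≤ vS q₂ ≤ p`, so either `p ≤ b` and pricing at `p` trades with gain `b - s`, or `b < p` and
pricing at the sample `b` trades in the configuration with `q₀` and `q₂` swapped, with the larger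
gain `p - s`. Hence the optimal gains restricted to `q₁ ≤ q₂` are at most twice the sample-pricing
gains. Swapping `q₁` and `q₂` covers the event `q₂ ≤ q₁`, where the seller value `vS q₂` is even
smaller, so these restricted gains are at least half of the optimal ones. -/

open MeasureTheory

theorem measurePreserving_comp_perm {ι α : Type*} [Fintype ι] [MeasurableSpace α]
    (μ : Measure α) [SigmaFinite μ] (e : Equiv.Perm ι) :
    MeasurePreserving (fun x : ι → α => x ∘ e) (Measure.pi fun _ => μ)
      (Measure.pi fun _ => μ) := by
  convert measurePreserving_arrowCongr' (fun _ => μ) (fun _ => μ) e.symm (MeasurableEquiv.refl α)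
    fun _ => MeasurePreserving.id μ
  rfl

theorem integral_le_two_mul_of_le_add_comp {α : Type*} [MeasurableSpace α] {μ : Measure α}
    {T : α → α} (hT : MeasurePreserving T μ μ) {f g : α → ℝ} (hf : Integrable f μ)
    (hg : Integrable g μ) (h : ∀ x, g x ≤ f x + f (T x)) :
    ∫ x, g x ∂μ ≤ 2 * ∫ x, f x ∂μ := by
  have hfT : ∫ x, f (T x) ∂μ = ∫ x, f x ∂μ := by
    rw [← integral_map hT.aemeasurable (by rw [hT.map_eq]; exact hf.aestronglyMeasurable),
      hT.map_eq]
  have hfT_int : Integrable (fun x => f (T x)) μ := hT.integrable_comp_of_integrable hf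
  calc ∫ x, g x ∂μ ≤ ∫ x, f x + f (T x) ∂μ := integral_mono hg (hf.add hfT_int) h
    _ = 2 * ∫ x, f x ∂μ := by rw [integral_add hf hfT_int, hfT, two_mul]

theorem integrable_ite_sub_comp_eval {ι X : Type*} [Fintype ι] [MeasurableSpace X]
    {μ : Measure X} [IsFiniteMeasure μ] {f g : X → ℝ} (hf : Integrable f μ)
    (hg : Integrable g μ) (i j : ι) {p : (ι → X) → Prop} [DecidablePred p]
    (hp : MeasurableSet {x | p x}) :
    Integrable (fun x => if p x then f (x i) - g (x j) else 0) (Measure.pi fun _ => μ) := by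
  have hfg : Integrable (fun x : ι → X => f (x i) - g (x j)) (Measure.pi fun _ => μ) :=
    (integrable_comp_eval hf).sub (integrable_comp_eval hg)
  refine (hfg.indicator hp).congr (ae_of_all _ fun x => ?_)
  simp only [Set.indicator_apply, Set.mem_ofPred_eq]

theorem ite_sub_antitone {b s s' : ℝ} (h : s' ≤ s) :
    (if b > s then b - s else 0) ≤ if b > s' then b - s' else 0 := by
  split_ifs <;> linarith

noncomputable section Gains

variable (vB vS : ℝ → ℝ)

def optimalGain (q : Fin 3 → ℝ) : ℝ :=
  if vB (q 0) > vS (q 1) then vB (q 0) - vS (q 1) else 0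

def samplePricingGain (q : Fin 3 → ℝ) : ℝ :=
  if vB (q 0) ≥ vB (q 2) ∧ vB (q 2) ≥ vS (q 1) then vB (q 0) - vS (q 1) else 0

def restrictedOptimalGain (q : Fin 3 → ℝ) : ℝ :=
  if q 1 ≤ q 2 ∧ vB (q 0) > vS (q 1) then vB (q 0) - vS (q 1) else 0

variable {vB vS}

theorem samplePricingGain_nonneg (q : Fin 3 → ℝ) : 0 ≤ samplePricingGain vB vS q := by
  unfold samplePricingGain
  split_ifs with h
  · linarith [h.1, h.2]
  · rfl

theorem restrictedOptimalGain_nonneg (q : Fin 3 → ℝ) : 0 ≤ restrictedOptimalGain vB vS q := by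
  unfold restrictedOptimalGain
  split_ifs with h
  · linarith [h.2]
  · rfl

theorem optimalGain_le_restrictedOptimalGain_add (hS : Monotone vS) (q : Fin 3 → ℝ) :
    optimalGain vB vS q ≤
      restrictedOptimalGain vB vS q + restrictedOptimalGain vB vS (q ∘ Equiv.swap 1 2) := by
  have h₁ := restrictedOptimalGain_nonneg (vB := vB) (vS := vS) q
  have h₂ := restrictedOptimalGain_nonneg (vB := vB) (vS := vS) (q ∘ Equiv.swap 1 2)
  rcases le_total (q 1) (q 2) with h | h
  · have : restrictedOptimalGain vB vS q = optimalGain vB vS q := by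
      simp only [restrictedOptimalGain, optimalGain, h, true_and]
    linarith
  · have : restrictedOptimalGain vB vS (q ∘ Equiv.swap 1 2) =
        if vB (q 0) > vS (q 2) then vB (q 0) - vS (q 2) else 0 := by
      have h0 : Equiv.swap (1 : Fin 3) 2 0 = 0 := by decide
      simp only [restrictedOptimalGain, Function.comp_apply, h0, Equiv.swap_apply_left,
        Equiv.swap_apply_right, h, true_and]
    rw [this]
    exact (ite_sub_antitone (hS h)).trans (le_add_of_nonneg_left h₁)

theorem restrictedOptimalGain_le_samplePricingGain_add (hS : Monotone vS)
    (hdom : ∀ x, vS x ≤ vB x) (q : Fin 3 → ℝ) :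
    restrictedOptimalGain vB vS q ≤
      samplePricingGain vB vS q + samplePricingGain vB vS (q ∘ Equiv.swap 0 2) := by
  have h₁ := samplePricingGain_nonneg (vB := vB) (vS := vS) q
  have h₂ := samplePricingGain_nonneg (vB := vB) (vS := vS) (q ∘ Equiv.swap 0 2)
  unfold restrictedOptimalGain
  split_ifs with h
  · obtain ⟨hq, hbs⟩ := h
    have hsp : vS (q 1) ≤ vB (q 2) := (hS hq).trans (hdom _)
    rcases le_total (vB (q 2)) (vB (q 0)) with hpb | hbp
    · have : samplePricingGain vB vS q = vB (q 0) - vS (q 1) := if_pos ⟨hpb, hsp⟩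
      linarith
    · have : samplePricingGain vB vS (q ∘ Equiv.swap 0 2) = vB (q 2) - vS (q 1) := by
        have h1 : Equiv.swap (0 : Fin 3) 2 1 = 1 := by decide
        simp only [samplePricingGain, Function.comp_apply, h1, Equiv.swap_apply_left,
          Equiv.swap_apply_right]
        exact if_pos ⟨hbp, hbs.le⟩
      linarith
  · linarith

end Gains

/-- Under FSD (quantile function `v_B` of `F_B` pointwise dominates `v_S` of `F_S`), with
`b = v_B (q 0)`, `s = v_S (q 1)` independent and `p = v_B (q 2)` an independent fresh sample
from `F_B` (the `q i` i.i.d. uniform on `(0,1)`), pricing at the sample obtains at least a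
quarter of the optimal gains from trade: `E[(b-s)·1[b ≥ p ≥ s]] ≥ (1/4)·E[(b-s)·1[b > s]]`. -/
theorem sample_pricing_fsd_quarter (vB vS : ℝ → ℝ) (hB : Monotone vB) (hS : Monotone vS)
    (hdom : ∀ x : ℝ, vS x ≤ vB x)
    (hIB : Integrable vB ((volume : Measure ℝ).restrict (Set.Ioo 0 1)))
    (hIS : Integrable vS ((volume : Measure ℝ).restrict (Set.Ioo 0 1))) :
    (1 / 4 : ℝ) * ∫ q : Fin 3 → ℝ,
        (if vB (q 0) > vS (q 1) then vB (q 0) - vS (q 1) else 0)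
        ∂(Measure.pi fun _ => (volume : Measure ℝ).restrict (Set.Ioo 0 1))
      ≤ ∫ q : Fin 3 → ℝ,
          (if vB (q 0) ≥ vB (q 2) ∧ vB (q 2) ≥ vS (q 1) then vB (q 0) - vS (q 1) else 0)
          ∂(Measure.pi fun _ => (volume : Measure ℝ).restrict (Set.Ioo 0 1)) := by
  set μ := Measure.pi fun _ : Fin 3 => (volume : Measure ℝ).restrict (Set.Ioo 0 1)
  have hmB := hB.measurable
  have hmS := hS.measurable
  have hOpt : Integrable (optimalGain vB vS) μ :=
    integrable_ite_sub_comp_eval hIB hIS 0 1 (by measurability)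
  have hRestricted : Integrable (restrictedOptimalGain vB vS) μ :=
    integrable_ite_sub_comp_eval hIB hIS 0 1 (by measurability)
  have hSample : Integrable (samplePricingGain vB vS) μ :=
    integrable_ite_sub_comp_eval hIB hIS 0 1 (by measurability)
  have hOptRestricted := integral_le_two_mul_of_le_add_comp (measurePreserving_comp_perm _ _)
    hRestricted hOpt (optimalGain_le_restrictedOptimalGain_add hS)
  have hRestrictedSample := integral_le_two_mul_of_le_add_comp (measurePreserving_comp_perm _ _)
    hSample hRestricted (restrictedOptimalGain_le_samplePricingGain_add hS hdom)
  change 1 / 4 * ∫ q, optimalGain vB vS q ∂μ ≤ ∫ q, samplePricingGain vB vS q ∂μ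
  linarith
end

section
/- Let s ∼ F_S and let b₁, ..., b_{k+1} ∼ F_B be i.i.d., all independent. Then E[max(s, b₁, ..., b_{k+1}) - s] ≤ (1+k) · E[(b - s)·1[b ≥ s and b ≥ max(p₁,...,p_k)]], where b ∼ F_B and p₁,...,p_k ∼ F_B are fresh independent samples. In particular, if BTR(1,1+k) ≥ OPT(1,1) then pricing at the maximum of k samples from F_B obtains at least a 1/(1+k) fraction of OPT(1,1). -/
open MeasureTheory

/-- Let `s ∼ F_S` and `b₁,...,b_{k+1} ∼ F_B` be i.i.d., all independent.  Then
`E[max(s, b₁,...,b_{k+1}) - s] ≤ (1+k)·E[(b-s)·1[b ≥ s ∧ b ≥ max(p₁,...,p_k)]]`, where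
`b ∼ F_B` and `p₁,...,p_k ∼ F_B` are fresh independent samples.  In particular, if
`BTR(1,1+k) ≥ OPT(1,1)` (with `BTR(1,1+k)` bounded by the left-hand quantity) then pricing at
the maximum of `k` samples from `F_B` obtains at least a `1/(1+k)` fraction of `OPT(1,1)`. -/
theorem max_sample_pricing (k : ℕ) (μS μB : Measure ℝ)
    [IsProbabilityMeasure μS] [IsProbabilityMeasure μB]
    (hIS : Integrable (fun x : ℝ => x) μS) (hIB : Integrable (fun x : ℝ => x) μB) :
    ((∫ x : ℝ × (Fin (k + 1) → ℝ),
        (max x.1 (Finset.univ.sup' Finset.univ_nonempty x.2) - x.1)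
        ∂(μS.prod (Measure.pi fun _ => μB)))
      ≤ (1 + (k : ℝ)) * ∫ y : (ℝ × ℝ) × (Fin k → ℝ),
          (if y.1.1 ≤ y.1.2 ∧ ∀ i, y.2 i ≤ y.1.2 then y.1.2 - y.1.1 else 0)
          ∂((μS.prod μB).prod (Measure.pi fun _ => μB)))
    ∧ ((∫ z : ℝ × ℝ, max (z.2 - z.1) 0 ∂(μS.prod μB))
          ≤ (∫ x : ℝ × (Fin (k + 1) → ℝ),
              (max x.1 (Finset.univ.sup' Finset.univ_nonempty x.2) - x.1)
              ∂(μS.prod (Measure.pi fun _ => μB))) →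
        (1 / (1 + (k : ℝ))) * (∫ z : ℝ × ℝ, max (z.2 - z.1) 0 ∂(μS.prod μB))
          ≤ ∫ y : (ℝ × ℝ) × (Fin k → ℝ),
              (if y.1.1 ≤ y.1.2 ∧ ∀ i, y.2 i ≤ y.1.2 then y.1.2 - y.1.1 else 0)
              ∂((μS.prod μB).prod (Measure.pi fun _ => μB))) := by
  classical
  set π : Measure (Fin (k + 1) → ℝ) := Measure.pi fun _ => μB with hπ
  set πk : Measure (Fin k → ℝ) := Measure.pi fun _ => μB with hπk
  set h : (ℝ × ℝ) × (Fin k → ℝ) → ℝ :=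
    fun y => if y.1.1 ≤ y.1.2 ∧ ∀ i, y.2 i ≤ y.1.2 then y.1.2 - y.1.1 else 0 with hh
  set g : Fin (k + 1) → (ℝ × (Fin (k + 1) → ℝ)) → ℝ :=
    fun j x => if x.1 ≤ x.2 j ∧ ∀ i, x.2 i ≤ x.2 j then x.2 j - x.1 else 0 with hg
  -- measure preserving equivalences
  have mpf1 : MeasurePreserving (Prod.fst : ((ℝ × ℝ) × (Fin k → ℝ)) → ℝ × ℝ)
      ((μS.prod μB).prod πk) (μS.prod μB) :=
    ⟨measurable_fst, by rw [Measure.map_fst_prod]; simp⟩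
  have mpf2 : MeasurePreserving (Prod.fst : (ℝ × ℝ) → ℝ) (μS.prod μB) μS :=
    ⟨measurable_fst, by rw [Measure.map_fst_prod]; simp⟩
  have mps2 : MeasurePreserving (Prod.snd : (ℝ × ℝ) → ℝ) (μS.prod μB) μB :=
    ⟨measurable_snd, by rw [Measure.map_snd_prod]; simp⟩
  -- measurability of h
  have hAmeas : MeasurableSet {y : (ℝ × ℝ) × (Fin k → ℝ) |
      y.1.1 ≤ y.1.2 ∧ ∀ i, y.2 i ≤ y.1.2} := by
    have heq : {y : (ℝ × ℝ) × (Fin k → ℝ) | y.1.1 ≤ y.1.2 ∧ ∀ i, y.2 i ≤ y.1.2}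
        = {y : (ℝ × ℝ) × (Fin k → ℝ) | y.1.1 ≤ y.1.2} ∩
          ⋂ i, {y : (ℝ × ℝ) × (Fin k → ℝ) | y.2 i ≤ y.1.2} := by
      ext y; simp [Set.mem_iInter]
    rw [heq]
    exact (measurableSet_le measurable_fst.fst measurable_fst.snd).inter
      (MeasurableSet.iInter fun i =>
        measurableSet_le measurable_snd.eval measurable_fst.snd)
  have hmeas : Measurable h := by
    apply Measurable.ite hAmeas
    · exact measurable_fst.snd.sub measurable_fst.fst
    · exact measurable_const
  -- integrability of h
  have hI11 : Integrable (fun y : (ℝ × ℝ) × (Fin k → ℝ) => y.1.1) ((μS.prod μB).prod πk) := by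
    have h1 : Integrable (fun z : ℝ × ℝ => z.1) (μS.prod μB) :=
      (mpf2.integrable_comp measurable_id.aestronglyMeasurable).mpr hIS
    exact (mpf1.integrable_comp h1.aestronglyMeasurable).mpr h1
  have hI12 : Integrable (fun y : (ℝ × ℝ) × (Fin k → ℝ) => y.1.2) ((μS.prod μB).prod πk) := by
    have h1 : Integrable (fun z : ℝ × ℝ => z.2) (μS.prod μB) :=
      (mps2.integrable_comp measurable_id.aestronglyMeasurable).mpr hIB
    exact (mpf1.integrable_comp h1.aestronglyMeasurable).mpr h1
  have hIh : Integrable h ((μS.prod μB).prod πk) := by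
    refine Integrable.mono' (hI11.abs.add hI12.abs) hmeas.aestronglyMeasurable
      (Filter.Eventually.of_forall fun y => ?_)
    simp only [hh, Real.norm_eq_abs]
    split_ifs with hc
    · calc |y.1.2 - y.1.1| ≤ |y.1.2| + |y.1.1| := abs_sub y.1.2 y.1.1
        _ = |y.1.1| + |y.1.2| := by ring
    · simp only [abs_zero, Pi.add_apply]
      exact add_nonneg (abs_nonneg _) (abs_nonneg _)
  -- for each j, the measure-preserving equivalence
  have key : ∀ j : Fin (k + 1),
      ∫ x : ℝ × (Fin (k + 1) → ℝ), g j x ∂(μS.prod π) = ∫ y, h y ∂((μS.prod μB).prod πk) := by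
    intro j
    set e : (ℝ × (Fin (k + 1) → ℝ)) ≃ᵐ (ℝ × ℝ) × (Fin k → ℝ) :=
      ((MeasurableEquiv.refl ℝ).prodCongr
        (MeasurableEquiv.piFinSuccAbove (fun _ => ℝ) j)).trans
        MeasurableEquiv.prodAssoc.symm with he
    have mpe : MeasurePreserving e (μS.prod π) ((μS.prod μB).prod πk) := by
      have h1 : MeasurePreserving
          ((MeasurableEquiv.refl ℝ).prodCongr (MeasurableEquiv.piFinSuccAbove (fun _ => ℝ) j))
          (μS.prod π) (μS.prod (μB.prod πk)) :=
        (MeasurePreserving.id μS).prod (measurePreserving_piFinSuccAbove (fun _ => μB) j)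
      have h2 : MeasurePreserving (MeasurableEquiv.prodAssoc.symm :
          (ℝ × (ℝ × (Fin k → ℝ))) ≃ᵐ (ℝ × ℝ) × (Fin k → ℝ))
          (μS.prod (μB.prod πk)) ((μS.prod μB).prod πk) :=
        (measurePreserving_prodAssoc μS μB πk).symm _
      exact h2.comp h1
    have hcomp : ∀ x, h (e x) = g j x := by
      intro x
      have he1 : e x = ((x.1, x.2 j), fun i => x.2 (j.succAbove i)) := by
        simp only [he, MeasurableEquiv.trans_apply,
          MeasurableEquiv.piFinSuccAbove_apply, MeasurableEquiv.prodAssoc,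
          MeasurableEquiv.symm_mk, MeasurableEquiv.coe_mk, Equiv.prodAssoc_symm_apply,
          MeasurableEquiv.refl_apply, Equiv.coe_fn_symm_mk, Fin.removeNth,
          MeasurableEquiv.prodCongr, Equiv.prodCongr_apply, EquivLike.coe_coe, Prod.map_apply]
        rfl
      rw [he1]
      simp only [hh, hg]
      congr 1
      simp only [eq_iff_iff]
      constructor
      · rintro ⟨h1, h2⟩
        refine ⟨h1, fun i => ?_⟩
        rcases eq_or_ne i j with rfl | hij
        · exact le_refl _
        · obtain ⟨m, rfl⟩ := Fin.exists_succAbove_eq hij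
          exact h2 m
      · rintro ⟨h1, h2⟩
        exact ⟨h1, fun i => h2 _⟩
    calc ∫ x, g j x ∂(μS.prod π) = ∫ x, h (e x) ∂(μS.prod π) := by
          simp_rw [hcomp]
      _ = ∫ y, h y ∂((μS.prod μB).prod πk) :=
          mpe.integral_comp e.measurableEmbedding h
  -- integrability of each g j
  have hIg : ∀ j, Integrable (g j) (μS.prod π) := by
    intro j
    set e : (ℝ × (Fin (k + 1) → ℝ)) ≃ᵐ (ℝ × ℝ) × (Fin k → ℝ) :=
      ((MeasurableEquiv.refl ℝ).prodCongr
        (MeasurableEquiv.piFinSuccAbove (fun _ => ℝ) j)).trans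
        MeasurableEquiv.prodAssoc.symm with he
    have mpe : MeasurePreserving e (μS.prod π) ((μS.prod μB).prod πk) := by
      have h1 : MeasurePreserving
          ((MeasurableEquiv.refl ℝ).prodCongr (MeasurableEquiv.piFinSuccAbove (fun _ => ℝ) j))
          (μS.prod π) (μS.prod (μB.prod πk)) :=
        (MeasurePreserving.id μS).prod (measurePreserving_piFinSuccAbove (fun _ => μB) j)
      have h2 : MeasurePreserving (MeasurableEquiv.prodAssoc.symm :
          (ℝ × (ℝ × (Fin k → ℝ))) ≃ᵐ (ℝ × ℝ) × (Fin k → ℝ))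
          (μS.prod (μB.prod πk)) ((μS.prod μB).prod πk) :=
        (measurePreserving_prodAssoc μS μB πk).symm _
      exact h2.comp h1
    have hcomp : ∀ x, h (e x) = g j x := by
      intro x
      have he1 : e x = ((x.1, x.2 j), fun i => x.2 (j.succAbove i)) := by
        simp only [he, MeasurableEquiv.trans_apply,
          MeasurableEquiv.piFinSuccAbove_apply, MeasurableEquiv.prodAssoc,
          MeasurableEquiv.symm_mk, MeasurableEquiv.coe_mk, Equiv.prodAssoc_symm_apply,
          MeasurableEquiv.refl_apply, Equiv.coe_fn_symm_mk, Fin.removeNth,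
          MeasurableEquiv.prodCongr, Equiv.prodCongr_apply, EquivLike.coe_coe, Prod.map_apply]
        rfl
      rw [he1]
      simp only [hh, hg]
      congr 1
      simp only [eq_iff_iff]
      constructor
      · rintro ⟨h1, h2⟩
        refine ⟨h1, fun i => ?_⟩
        rcases eq_or_ne i j with rfl | hij
        · exact le_refl _
        · obtain ⟨m, rfl⟩ := Fin.exists_succAbove_eq hij
          exact h2 m
      · rintro ⟨h1, h2⟩
        exact ⟨h1, fun i => h2 _⟩
    have : Integrable (h ∘ e) (μS.prod π) :=
      (mpe.integrable_comp hmeas.aestronglyMeasurable).mpr hIh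
    have heq : (h ∘ e) = g j := funext fun x => hcomp x
    rwa [heq] at this
  -- pointwise bound
  have hpt : ∀ x : ℝ × (Fin (k + 1) → ℝ),
      max x.1 (Finset.univ.sup' Finset.univ_nonempty x.2) - x.1 ≤ ∑ j, g j x := by
    intro x
    have hnn : ∀ j ∈ Finset.univ, 0 ≤ g j x := by
      intro j _
      simp only [hg]
      split_ifs with hc
      · linarith [hc.1]
      · exact le_refl 0
    obtain ⟨j, -, hj⟩ := Finset.exists_mem_eq_sup' (Finset.univ_nonempty) x.2
    rcases le_total (Finset.univ.sup' Finset.univ_nonempty x.2) x.1 with hle | hle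
    · have hmx : max x.1 (Finset.univ.sup' Finset.univ_nonempty x.2) = x.1 := max_eq_left hle
      rw [hmx, sub_self]
      exact Finset.sum_nonneg hnn
    · have hmax : max x.1 (Finset.univ.sup' Finset.univ_nonempty x.2)
          = Finset.univ.sup' Finset.univ_nonempty x.2 := max_eq_right hle
      have hgj : g j x = x.2 j - x.1 := by
        simp only [hg]
        rw [if_pos]
        refine ⟨by rw [← hj]; exact hle, fun i => ?_⟩
        rw [← hj]
        exact Finset.le_sup' x.2 (Finset.mem_univ i)
      calc max x.1 (Finset.univ.sup' Finset.univ_nonempty x.2) - x.1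
          = x.2 j - x.1 := by rw [hmax, hj]
        _ = g j x := hgj.symm
        _ ≤ ∑ i, g i x := Finset.single_le_sum hnn (Finset.mem_univ j)
  -- main inequality
  have main : (∫ x : ℝ × (Fin (k + 1) → ℝ),
        (max x.1 (Finset.univ.sup' Finset.univ_nonempty x.2) - x.1) ∂(μS.prod π))
      ≤ (1 + (k : ℝ)) * ∫ y, h y ∂((μS.prod μB).prod πk) := by
    have step1 : (∫ x : ℝ × (Fin (k + 1) → ℝ),
          (max x.1 (Finset.univ.sup' Finset.univ_nonempty x.2) - x.1) ∂(μS.prod π))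
        ≤ ∫ x, (∑ j, g j x) ∂(μS.prod π) := by
      refine integral_mono_of_nonneg (Filter.Eventually.of_forall fun x => ?_)
        (integrable_finset_sum _ fun j _ => hIg j)
        (Filter.Eventually.of_forall fun x => hpt x)
      simp only [Pi.zero_apply, sub_nonneg]
      exact le_max_left _ _
    have step2 : ∫ x, (∑ j, g j x) ∂(μS.prod π)
        = (1 + (k : ℝ)) * ∫ y, h y ∂((μS.prod μB).prod πk) := by
      rw [integral_finset_sum _ fun j _ => hIg j]
      simp_rw [key]
      rw [Finset.sum_const, Finset.card_univ, Fintype.card_fin]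
      ring
    linarith
  constructor
  · exact main
  · intro hOPT
    have hk : (0 : ℝ) < 1 + k := by positivity
    rw [one_div, inv_mul_le_iff₀ hk]
    calc (∫ z : ℝ × ℝ, max (z.2 - z.1) 0 ∂(μS.prod μB))
        ≤ _ := hOPT
      _ ≤ _ := main
end

section
/- (Subadditivity of optimal GFT in sellers.) Fix value vectors: a single buyer-value vector b of length r, and t seller-value vectors s₁,...,s_t of lengths m₁,...,m_t. Let OPT(s, b) denote the optimal gains from trade Σ_j (b^(j) - s^(j))₊ where b^(j) is the j-th highest buyer value (padded with -∞ beyond r) and s^(j) the j-th lowest seller value. Then OPT over the combined market with all Σm_i sellers and the r buyers is at most the sum over i of OPT over the market with sellers s_i and the same r buyers. -/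
/-!
Sorting the combined sellers is merging the sorted seller groups, and a seller that lands in
position `j` of the merge holds a position `k ≤ j` in its own group. Matched against the `j`-th
highest buyer it therefore gains at most what it gains against the `k`-th highest buyer in its
own market, because buyer values decrease along the ranking. Induction along the merge gives
subadditivity for two groups, and subadditivity extends to finite sums.
-/

/-- The optimal gains from trade of a double-auction market with seller values `s` and buyer
values `b`: `Σ_j (b^(j) - s^(j))₊`, where `b^(j)` is the `j`-th highest buyer value (terms with
`j` beyond the number of buyers vanish, corresponding to padding with `-∞`) and `s^(j)` the
`j`-th lowest seller value, `j` ranging over `1,...,|s|`. -/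
noncomputable def optGFT (s b : Multiset ℝ) : ℝ :=
  ∑ j ∈ Finset.range (min (Multiset.card s) (Multiset.card b)),
    max ((b.sort (· ≤ ·)).getD (Multiset.card b - 1 - j) 0
          - (s.sort (· ≤ ·)).getD j 0) 0

namespace List

variable {α β : Type*} [AddCommMonoid β]

theorem sum_range_getD_eq_sum_mapIdx (f : ℕ → α → β) (l : List α) (d : α) :
    ∑ j ∈ Finset.range l.length, f j (l.getD j d) = (l.mapIdx f).sum := by
  induction l generalizing f with
  | nil => simp
  | cons a l ih =>
    rw [length_cons, Finset.sum_range_succ', mapIdx_cons, sum_cons, add_comm]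
    simp only [getD_cons_succ, getD_cons_zero, ih]

variable [PartialOrder β] [IsOrderedAddMonoid β]

theorem sum_mapIdx_succ_le {g : ℕ → α → β} (hg : ∀ j a, g (j + 1) a ≤ g j a) (l : List α) :
    (l.mapIdx fun j => g (j + 1)).sum ≤ (l.mapIdx g).sum := by
  induction l generalizing g with
  | nil => simp
  | cons a l ih =>
    simp only [mapIdx_cons, sum_cons]
    exact add_le_add (hg 0 a) (ih (g := fun j => g (j + 1)) fun j => hg (j + 1))

theorem sum_mapIdx_merge_le {g : ℕ → α → β} (hg : ∀ j a, g (j + 1) a ≤ g j a)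
    (le : α → α → Bool) (l₁ l₂ : List α) :
    ((l₁.merge l₂ le).mapIdx g).sum ≤ (l₁.mapIdx g).sum + (l₂.mapIdx g).sum := by
  fun_induction List.merge l₁ l₂ le generalizing g with
  | case1 => simp
  | case2 => simp
  | case3 x xs y ys _ ih =>
    have hg' : ∀ j a, g (j + 1 + 1) a ≤ g (j + 1) a := fun j => hg (j + 1)
    calc ((x :: xs.merge (y :: ys) le).mapIdx g).sum
        = g 0 x + ((xs.merge (y :: ys) le).mapIdx fun j => g (j + 1)).sum := by simp
      _ ≤ g 0 x + ((xs.mapIdx fun j => g (j + 1)).sum +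
            ((y :: ys).mapIdx fun j => g (j + 1)).sum) := by
          gcongr g 0 _ + ?_; exact ih hg'
      _ ≤ g 0 x + ((xs.mapIdx fun j => g (j + 1)).sum + ((y :: ys).mapIdx g).sum) := by
          gcongr g 0 _ + (_ + ?_); exact sum_mapIdx_succ_le hg _
      _ = ((x :: xs).mapIdx g).sum + ((y :: ys).mapIdx g).sum := by simp [add_assoc]
  | case4 x xs y ys _ ih =>
    have hg' : ∀ j a, g (j + 1 + 1) a ≤ g (j + 1) a := fun j => hg (j + 1)
    calc ((y :: (x :: xs).merge ys le).mapIdx g).sum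
        = g 0 y + (((x :: xs).merge ys le).mapIdx fun j => g (j + 1)).sum := by simp
      _ ≤ g 0 y + (((x :: xs).mapIdx fun j => g (j + 1)).sum +
            (ys.mapIdx fun j => g (j + 1)).sum) := by
          gcongr g 0 _ + ?_; exact ih hg'
      _ ≤ g 0 y + (((x :: xs).mapIdx g).sum + (ys.mapIdx fun j => g (j + 1)).sum) := by
          gcongr g 0 _ + (?_ + _); exact sum_mapIdx_succ_le hg _
      _ = ((x :: xs).mapIdx g).sum + ((y :: ys).mapIdx g).sum := by simp [add_left_comm]

end List

namespace Multiset

theorem sort_add {α : Type*} [LinearOrder α] (s t : Multiset α) :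
    (s + t).sort (· ≤ ·) = (s.sort (· ≤ ·)).merge (t.sort (· ≤ ·)) := by
  refine List.Perm.eq_of_pairwise' (pairwise_sort _ _) ?_ ?_
  · exact (pairwise_sort s _).merge (pairwise_sort t _)
  · refine List.Perm.trans ?_ (List.merge_perm_append (le := fun a b => decide (a ≤ b))).symm
    rw [← coe_eq_coe, ← coe_add, sort_eq, sort_eq, sort_eq]

end Multiset

open Multiset

/-- The gain of matching a seller of value `v` with the `j`-th highest buyer of `b`, counting
from `j = 0`; it is `0` when there is no such buyer, as for a buyer of value `-∞`. -/
noncomputable def matchGain (b : Multiset ℝ) (j : ℕ) (v : ℝ) : ℝ :=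
  if j < card b then max ((b.sort (· ≤ ·)).getD (card b - 1 - j) 0 - v) 0 else 0

theorem matchGain_succ_le (b : Multiset ℝ) (j : ℕ) (v : ℝ) :
    matchGain b (j + 1) v ≤ matchGain b j v := by
  unfold matchGain
  split_ifs with hsucc hj hj
  · have hlen : (b.sort (· ≤ ·)).length = card b := length_sort _
    have hbuyer : (b.sort (· ≤ ·)).getD (card b - 1 - (j + 1)) 0 ≤
        (b.sort (· ≤ ·)).getD (card b - 1 - j) 0 := by
      rw [List.getD_eq_getElem _ _ (by omega), List.getD_eq_getElem _ _ (by omega)]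
      exact (pairwise_sort b _).sortedLE.getElem_le_getElem_of_le (by omega)
    gcongr
  · omega
  · exact le_max_right _ _
  · rfl

theorem optGFT_eq_sum_mapIdx (s b : Multiset ℝ) :
    optGFT s b = ((s.sort (· ≤ ·)).mapIdx (matchGain b)).sum := by
  rw [← List.sum_range_getD_eq_sum_mapIdx _ _ 0, length_sort, optGFT]
  simp only [matchGain]
  rw [← Finset.sum_filter]
  congr 1
  ext j
  simp only [Finset.mem_range, Finset.mem_filter, lt_min_iff]

theorem optGFT_add_le (s t b : Multiset ℝ) : optGFT (s + t) b ≤ optGFT s b + optGFT t b := by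
  simp only [optGFT_eq_sum_mapIdx, sort_add]
  exact List.sum_mapIdx_merge_le (matchGain_succ_le b) _ _ _

/-- Subadditivity of the optimal gains from trade in sellers: the optimum of the combined
market with all seller groups `s i` and the buyers `b` is at most the sum over `i` of the
optimum of the market with sellers `s i` and the same buyers `b`. -/
theorem optGFT_subadditive_in_sellers (t : ℕ) (s : Fin t → Multiset ℝ) (b : Multiset ℝ) :
    optGFT (∑ i, s i) b ≤ ∑ i, optGFT (s i) b :=
  Finset.le_sum_of_subadditive (optGFT · b) (by simp [optGFT]) (optGFT_add_le · · b) _ _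
end

section
/- (Superadditivity of BTR under market unification, deterministic version.) Fix t markets with seller value vectors s₁,...,s_t and buyer value vectors b₁,...,b_t. Let BTR(s,b) denote the gains from trade achieved by the Buyer Trade Reduction mechanism on market (s,b). Then Σ_{i=1}^t BTR(s_i, b_i) ≤ BTR(s, b), where (s,b) is the unified market containing all sellers and all buyers. -/
/-!
BTR's post-trade welfare `btrGFT s b + s.sum` is the largest welfare of an allocation in which
every seller who sells is outbid by some buyer who does not buy. BTR's own outcome is such an
allocation, the outbidding buyer being the `(q+1)`-st highest buyer or the buyer of the reduced
pair. Conversely, an allocation with `k` trades is worth at most the `k` efficient pairs, hence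
at most BTR's outcome, unless BTR reduces and `k ≥ q`; then the idle buyer outbids the reduced
seller, so it is one of the `q` highest buyers, and the `k` trades are worth at most the first
`q - 1` efficient pairs. Such allocations of separate markets add up to one of the unified
market.
-/

/-- The efficient trade size of the market `(s, b)`: the maximal number `q` such that the `q`
highest buyer values are each at least the corresponding of the `q` lowest seller values (ties
broken in favor of buyers).  Since `b^(j) - s^(j)` is nonincreasing in `j`, this is the number
of indices `j` with `b^(j) ≥ s^(j)`. -/
noncomputable def tradeSize (s b : Multiset ℝ) : ℕ :=
  ((Finset.range (min (Multiset.card s) (Multiset.card b))).filter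
    (fun j => (s.sort (· ≤ ·)).getD j 0
      ≤ (b.sort (· ≤ ·)).getD (Multiset.card b - 1 - j) 0)).card

/-- The gains from trade of the Buyer Trade Reduction mechanism on the market `(s, b)`:
with `q` the efficient trade size, if `b^(q+1)` exists and `b^(q+1) ≥ s^(q)` then all `q`
efficient pairs trade and the GFT is `Σ_{j=1}^{q} (b^(j) - s^(j))`; otherwise the last pair is
reduced and the GFT is `Σ_{j=1}^{q-1} (b^(j) - s^(j))`. -/
noncomputable def btrGFT (s b : Multiset ℝ) : ℝ :=
  if tradeSize s b < Multiset.card b ∧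
      (s.sort (· ≤ ·)).getD (tradeSize s b - 1) 0
        ≤ (b.sort (· ≤ ·)).getD (Multiset.card b - 1 - tradeSize s b) 0 then
    ∑ j ∈ Finset.range (tradeSize s b),
      ((b.sort (· ≤ ·)).getD (Multiset.card b - 1 - j) 0 - (s.sort (· ≤ ·)).getD j 0)
  else
    ∑ j ∈ Finset.range (tradeSize s b - 1),
      ((b.sort (· ≤ ·)).getD (Multiset.card b - 1 - j) 0 - (s.sort (· ≤ ·)).getD j 0)


namespace List

variable {α : Type*} {l l' : List α} {d : α} {i j : ℕ}

theorem Sublist.exists_getD_eq (h : l' <+ l) (hj : j < l'.length) :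
    ∃ i, j ≤ i ∧ i < l.length ∧ l'.getD j d = l.getD i d := by
  obtain ⟨f, hf⟩ := sublist_iff_exists_orderEmbedding_getElem?_eq.1 h
  have hfj := hf j
  rw [getElem?_eq_getElem hj, eq_comm, getElem?_eq_some_iff] at hfj
  obtain ⟨hlt, heq⟩ := hfj
  refine ⟨f j, f.strictMono.le_apply, hlt, ?_⟩
  rw [getD_eq_getElem _ _ hj, getD_eq_getElem _ _ hlt, heq]

section Preorder

variable [Preorder α]

theorem SortedLE.getD_le_getD (hl : l.SortedLE) (hij : i ≤ j) (hj : j < l.length) :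
    l.getD i d ≤ l.getD j d := by
  rw [getD_eq_getElem _ _ (hij.trans_lt hj), getD_eq_getElem _ _ hj]
  exact hl.getElem_le_getElem_of_le hij

theorem SortedGE.getD_le_getD (hl : l.SortedGE) (hij : i ≤ j) (hj : j < l.length) :
    l.getD j d ≤ l.getD i d := by
  rw [getD_eq_getElem _ _ (hij.trans_lt hj), getD_eq_getElem _ _ hj]
  exact hl.getElem_ge_getElem_of_le hij

theorem Sublist.getD_le_getD_of_sortedLE (h : l' <+ l) (hl : l.SortedLE) (hj : j < l'.length) :
    l.getD j d ≤ l'.getD j d := by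
  obtain ⟨i, hji, hi, heq⟩ := h.exists_getD_eq (d := d) hj
  exact heq ▸ hl.getD_le_getD hji hi

theorem Sublist.getD_le_getD_of_sortedGE (h : l' <+ l) (hl : l.SortedGE) (hj : j < l'.length) :
    l'.getD j d ≤ l.getD j d := by
  obtain ⟨i, hji, hi, heq⟩ := h.exists_getD_eq (d := d) hj
  exact heq ▸ hl.getD_le_getD hji hi

end Preorder

theorem sum_range_getD {M : Type*} [AddCommMonoid M] (l : List M) {k : ℕ} (hk : k ≤ l.length) :
    ∑ j ∈ Finset.range k, l.getD j 0 = (l.take k).sum := by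
  induction k with
  | zero => simp
  | succ k ih =>
    rw [Finset.sum_range_succ, ih (by omega), getD_eq_getElem _ _ (by omega), sum_take_succ]

end List

theorem Finset.lt_card_filter_range_iff {p : ℕ → Prop} [DecidablePred p] {n : ℕ}
    (hp : ∀ i j, i ≤ j → j < n → p j → p i) {j : ℕ} :
    j < ((range n).filter p).card ↔ j < n ∧ p j := by
  induction n with
  | zero => simp
  | succ n ih =>
    have hn : n ∉ (range n).filter p := by simp
    rw [range_add_one, filter_insert]
    by_cases hpn : p n
    · rw [if_pos hpn, card_insert_of_notMem hn,
        filter_true_of_mem fun i hi ↦ hp i n (mem_range.1 hi).le (by omega) hpn, card_range]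
      exact ⟨fun hj ↦ ⟨hj, hp j n (by omega) (by omega) hpn⟩, And.left⟩
    · rw [if_neg hpn, ih fun i j hij hj ↦ hp i j hij (by omega)]
      constructor
      · exact fun ⟨hj, hpj⟩ ↦ ⟨by omega, hpj⟩
      · rintro ⟨hj, hpj⟩
        exact ⟨lt_of_le_of_ne (by omega) (by rintro rfl; exact hpn hpj), hpj⟩

namespace Multiset

theorem sort_sublist_sort {α : Type*} (r : α → α → Prop) [DecidableRel r] [IsTrans α r]
    [Std.Antisymm r] [Std.Total r] {s t : Multiset α} (h : s ≤ t) :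
    (s.sort r).Sublist (t.sort r) := by
  refine List.sublist_of_subperm_of_pairwise ?_ (pairwise_sort s r) (pairwise_sort t r)
  rwa [← coe_le, sort_eq, sort_eq]

variable {α : Type*} [LinearOrder α]

theorem sortedLE_sort (s : Multiset α) : (s.sort (· ≤ ·)).SortedLE :=
  (pairwise_sort s _).sortedLE

variable [Zero α] {s t : Multiset α} {i j k : ℕ}

/-! For sellers `s` and buyers `b`, `s.nthSmallest j` and `b.nthLargest j` are the paper's
`s^(j+1)` and `b^(j+1)`: indices start at `0`. -/

noncomputable def nthSmallest (s : Multiset α) (j : ℕ) : α := (s.sort (· ≤ ·)).getD j 0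

noncomputable def nthLargest (s : Multiset α) (j : ℕ) : α :=
  (s.sort (· ≤ ·)).getD (card s - 1 - j) 0

theorem nthLargest_eq_getD_reverse (hj : j < card s) :
    s.nthLargest j = (s.sort (· ≤ ·)).reverse.getD j 0 := by
  rw [List.getD_reverse _ (by rwa [length_sort]), length_sort, nthLargest]

theorem nthSmallest_mono (hij : i ≤ j) (hj : j < card s) : s.nthSmallest i ≤ s.nthSmallest j :=
  (sortedLE_sort s).getD_le_getD hij (by rwa [length_sort])

theorem nthLargest_anti (hij : i ≤ j) (hj : j < card s) : s.nthLargest j ≤ s.nthLargest i := by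
  rw [nthLargest_eq_getD_reverse hj, nthLargest_eq_getD_reverse (hij.trans_lt hj)]
  exact (sortedLE_sort s).reverse.getD_le_getD hij (by rwa [List.length_reverse, length_sort])

theorem nthSmallest_le_nthSmallest_of_le (h : s ≤ t) (hj : j < card s) :
    t.nthSmallest j ≤ s.nthSmallest j :=
  (sort_sublist_sort _ h).getD_le_getD_of_sortedLE (sortedLE_sort t) (by rwa [length_sort])

theorem nthLargest_le_nthLargest_of_le (h : s ≤ t) (hj : j < card s) :
    s.nthLargest j ≤ t.nthLargest j := by
  rw [nthLargest_eq_getD_reverse hj, nthLargest_eq_getD_reverse (hj.trans_le (card_le_card h))]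
  exact (sort_sublist_sort _ h).reverse.getD_le_getD_of_sortedGE (sortedLE_sort t).reverse
    (by rwa [List.length_reverse, length_sort])

theorem nthSmallest_mem (hj : j < card s) : s.nthSmallest j ∈ s := by
  rw [nthSmallest, List.getD_eq_getElem _ _ (by rwa [length_sort]), ← mem_sort (· ≤ ·)]
  exact List.getElem_mem _

theorem exists_nthLargest_eq {x : α} (hx : x ∈ s) : ∃ j < card s, s.nthLargest j = x := by
  rw [← mem_sort (· ≤ ·), ← List.mem_reverse, List.mem_iff_getElem] at hx
  obtain ⟨j, hj, rfl⟩ := hx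
  rw [List.length_reverse, length_sort] at hj
  exact ⟨j, hj, by rw [nthLargest_eq_getD_reverse hj, List.getD_eq_getElem]⟩

section Sum

variable {M : Type*} [AddCommMonoid M] [LinearOrder M] {s t : Multiset M} {k : ℕ}

theorem sum_range_nthSmallest (hk : k ≤ card s) :
    ∑ j ∈ Finset.range k, s.nthSmallest j = ((s.sort (· ≤ ·)).take k).sum :=
  List.sum_range_getD _ (by rwa [length_sort])

theorem sum_range_nthLargest (hk : k ≤ card s) :
    ∑ j ∈ Finset.range k, s.nthLargest j = ((s.sort (· ≤ ·)).reverse.take k).sum := by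
  rw [← List.sum_range_getD _ (by rwa [List.length_reverse, length_sort])]
  exact Finset.sum_congr rfl fun j hj ↦ nthLargest_eq_getD_reverse ((Finset.mem_range.1 hj).trans_le hk)

theorem sum_range_card_nthSmallest (s : Multiset M) :
    ∑ j ∈ Finset.range (card s), s.nthSmallest j = s.sum := by
  rw [sum_range_nthSmallest le_rfl, List.take_of_length_le (length_sort _).le, ← sum_coe,
    sort_eq]

theorem sum_range_card_nthLargest (s : Multiset M) :
    ∑ j ∈ Finset.range (card s), s.nthLargest j = s.sum := by
  rw [sum_range_nthLargest le_rfl,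
    List.take_of_length_le (by rw [List.length_reverse, length_sort]), List.sum_reverse,
    ← sum_coe, sort_eq]

variable [IsOrderedAddMonoid M]

theorem sum_range_card_nthSmallest_le (h : s ≤ t) :
    ∑ j ∈ Finset.range (card s), t.nthSmallest j ≤ s.sum := by
  rw [← sum_range_card_nthSmallest s]
  exact Finset.sum_le_sum fun j hj ↦
    nthSmallest_le_nthSmallest_of_le h (Finset.mem_range.1 hj)

theorem sum_le_sum_range_card_nthLargest (h : s ≤ t) :
    s.sum ≤ ∑ j ∈ Finset.range (card s), t.nthLargest j := by
  rw [← sum_range_card_nthLargest s]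
  exact Finset.sum_le_sum fun j hj ↦ nthLargest_le_nthLargest_of_le h (Finset.mem_range.1 hj)

end Sum

end Multiset

open Multiset

section Market

variable (s b : Multiset ℝ)

noncomputable def matchedGFT (k : ℕ) : ℝ :=
  ∑ j ∈ Finset.range k, (b.nthLargest j - s.nthSmallest j)

theorem btrGFT_eq : btrGFT s b =
    if tradeSize s b < card b ∧ s.nthSmallest (tradeSize s b - 1) ≤ b.nthLargest (tradeSize s b)
    then matchedGFT s b (tradeSize s b) else matchedGFT s b (tradeSize s b - 1) := rfl

theorem lt_tradeSize_iff {j : ℕ} :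
    j < tradeSize s b ↔ j < min (card s) (card b) ∧ s.nthSmallest j ≤ b.nthLargest j :=
  Finset.lt_card_filter_range_iff fun i j hij hj hpj ↦
    (nthSmallest_mono hij (by omega)).trans <| hpj.trans <| nthLargest_anti hij (by omega)

theorem tradeSize_le_min : tradeSize s b ≤ min (card s) (card b) :=
  (Finset.card_filter_le _ _).trans (Finset.card_range _).le

variable {s b}

theorem matchedGFT_succ (k : ℕ) :
    matchedGFT s b (k + 1) = matchedGFT s b k + (b.nthLargest k - s.nthSmallest k) :=
  Finset.sum_range_succ _ k

theorem matchedGFT_add_sum_Ico {k₁ k₂ : ℕ} (h : k₁ ≤ k₂) :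
    matchedGFT s b k₁ + ∑ j ∈ Finset.Ico k₁ k₂, (b.nthLargest j - s.nthSmallest j)
      = matchedGFT s b k₂ :=
  Finset.sum_range_add_sum_Ico _ h

theorem matchedGFT_mono_of_le_tradeSize {k₁ k₂ : ℕ} (h : k₁ ≤ k₂) (h₂ : k₂ ≤ tradeSize s b) :
    matchedGFT s b k₁ ≤ matchedGFT s b k₂ := by
  rw [← matchedGFT_add_sum_Ico h, le_add_iff_nonneg_right]
  refine Finset.sum_nonneg fun j hj ↦ sub_nonneg.2 ((lt_tradeSize_iff s b).1 ?_).2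
  exact (Finset.mem_Ico.1 hj).2.trans_le h₂

theorem matchedGFT_anti_of_tradeSize_le {k₁ k₂ : ℕ} (h₁ : tradeSize s b ≤ k₁) (h : k₁ ≤ k₂)
    (h₂ : k₂ ≤ min (card s) (card b)) : matchedGFT s b k₂ ≤ matchedGFT s b k₁ := by
  rw [← matchedGFT_add_sum_Ico h, add_le_iff_nonpos_right]
  refine Finset.sum_nonpos fun j hj ↦ sub_nonpos.2 (le_of_not_ge fun hle ↦ ?_)
  rw [Finset.mem_Ico] at hj
  have := (lt_tradeSize_iff s b).2 ⟨hj.2.trans_le h₂, hle⟩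
  omega

theorem matchedGFT_le_matchedGFT_tradeSize {k : ℕ} (hk : k ≤ min (card s) (card b)) :
    matchedGFT s b k ≤ matchedGFT s b (tradeSize s b) := by
  rcases le_total k (tradeSize s b) with h | h
  · exact matchedGFT_mono_of_le_tradeSize h le_rfl
  · exact matchedGFT_anti_of_tradeSize_le le_rfl h hk

theorem matchedGFT_add_nthLargest_le {p k : ℕ} (hp : b.nthLargest (p + 1) < s.nthSmallest p)
    (hpk : p ≤ k) (hkb : k < card b) (hks : k ≤ card s) :
    matchedGFT s b k + b.nthLargest k ≤ matchedGFT s b p + b.nthLargest p := by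
  induction k, hpk using Nat.le_induction with
  | base => rfl
  | succ m hpm ih =>
    have hstep : b.nthLargest (m + 1) ≤ s.nthSmallest m :=
      (nthLargest_anti (by omega) hkb).trans <| hp.le.trans <| nthSmallest_mono hpm (by omega)
    have := ih (by omega) (by omega)
    rw [matchedGFT_succ]
    linarith

end Market

/-- After trade, the sellers in `s'` still hold their items and the buyers in `b'` hold one
each; the last condition says that the price of the trade can be set by a buyer who does not
trade, as in BTR. -/
structure IsBuyerPricedAllocation (s b s' b' : Multiset ℝ) : Prop where
  le_sellers : s' ≤ s
  le_buyers : b' ≤ b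
  card_add_card : card s' + card b' = card s
  exists_idle_buyer : ∀ y ∈ s - s', ∃ x ∈ b - b', y ≤ x

namespace IsBuyerPricedAllocation

variable {s b s' b' : Multiset ℝ}

theorem add {s₂ b₂ s₂' b₂' : Multiset ℝ} (h : IsBuyerPricedAllocation s b s' b')
    (h₂ : IsBuyerPricedAllocation s₂ b₂ s₂' b₂') :
    IsBuyerPricedAllocation (s + s₂) (b + b₂) (s' + s₂') (b' + b₂') where
  le_sellers := add_le_add h.le_sellers h₂.le_sellers
  le_buyers := add_le_add h.le_buyers h₂.le_buyers
  card_add_card := by simp only [card_add]; linarith [h.card_add_card, h₂.card_add_card]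
  exists_idle_buyer y hy := by
    rw [← tsub_add_tsub_comm h.le_sellers h₂.le_sellers, mem_add] at hy
    rw [← tsub_add_tsub_comm h.le_buyers h₂.le_buyers]
    rcases hy with hy | hy
    · obtain ⟨x, hx, hyx⟩ := h.exists_idle_buyer y hy
      exact ⟨x, mem_add.2 (Or.inl hx), hyx⟩
    · obtain ⟨x, hx, hyx⟩ := h₂.exists_idle_buyer y hy
      exact ⟨x, mem_add.2 (Or.inr hx), hyx⟩

theorem card_sub_sellers (h : IsBuyerPricedAllocation s b s' b') : card (s - s') = card b' := by
  rw [card_sub h.le_sellers]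
  have := h.card_add_card
  omega

theorem sum_add_sum_range_nthSmallest_le (h : IsBuyerPricedAllocation s b s' b') :
    s'.sum + ∑ j ∈ Finset.range (card b'), s.nthSmallest j ≤ s.sum := by
  have hsold := sum_range_card_nthSmallest_le (tsub_le_self : s - s' ≤ s)
  rw [h.card_sub_sellers] at hsold
  calc s'.sum + ∑ j ∈ Finset.range (card b'), s.nthSmallest j ≤ s'.sum + (s - s').sum := by
        linarith
    _ = s.sum := by rw [← sum_add, add_tsub_cancel_of_le h.le_sellers]

theorem sum_add_sum_le_add_matchedGFT (h : IsBuyerPricedAllocation s b s' b') :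
    s'.sum + b'.sum ≤ s.sum + matchedGFT s b (card b') := by
  rw [matchedGFT, Finset.sum_sub_distrib]
  linarith [h.sum_add_sum_range_nthSmallest_le, sum_le_sum_range_card_nthLargest h.le_buyers]

/-- The idle buyer outbids the reduced seller, so it is one of the `tradeSize s b` highest
buyers. -/
theorem sum_add_sum_le_of_reduced (h : IsBuyerPricedAllocation s b s' b')
    (hq : 0 < tradeSize s b) (hqk : tradeSize s b ≤ card b')
    (hred : ¬(tradeSize s b < card b ∧
      s.nthSmallest (tradeSize s b - 1) ≤ b.nthLargest (tradeSize s b))) :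
    s'.sum + b'.sum ≤ s.sum + matchedGFT s b (tradeSize s b - 1) := by
  set q := tradeSize s b
  set k := card b'
  have hks : k ≤ card s := by have := h.card_add_card; omega
  obtain ⟨x, hx, hyx⟩ := h.exists_idle_buyer _ (nthSmallest_mem (s := s - s') (j := k - 1)
    (by rw [h.card_sub_sellers]; omega))
  have hkb : k < card b := by
    have := card_pos_iff_exists_mem.2 ⟨x, hx⟩
    rw [card_sub h.le_buyers] at this
    omega
  have hred' : b.nthLargest q < s.nthSmallest (q - 1) := lt_of_not_ge (not_and.1 hred (by omega))
  have hqx : b.nthLargest q < x :=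
    hred'.trans_le <| (nthSmallest_mono (by omega) (by omega)).trans <|
      (nthSmallest_le_nthSmallest_of_le tsub_le_self (by rw [h.card_sub_sellers]; omega)).trans hyx
  have hxq : b.nthLargest (q - 1) ≤ x := by
    obtain ⟨p, hp, rfl⟩ := exists_nthLargest_eq (mem_of_le tsub_le_self hx)
    have hpq : p < q := lt_of_not_ge fun hqp ↦ (nthLargest_anti hqp hp).not_gt hqx
    exact nthLargest_anti (by omega) (by omega)
  have hbx : b' + {x} ≤ b := (le_tsub_iff_left h.le_buyers).1 (singleton_le.2 hx)
  have hbought := sum_le_sum_range_card_nthLargest hbx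
  rw [card_add, card_singleton, sum_add, sum_singleton, Finset.sum_range_succ] at hbought
  have hkey := matchedGFT_add_nthLargest_le (p := q - 1) (k := k)
    (by rwa [Nat.sub_add_cancel hq]) (by omega) hkb hks
  rw [matchedGFT, Finset.sum_sub_distrib] at hkey
  linarith [h.sum_add_sum_range_nthSmallest_le]

theorem sum_add_sum_le (h : IsBuyerPricedAllocation s b s' b') :
    s'.sum + b'.sum ≤ btrGFT s b + s.sum := by
  have hk : card b' ≤ min (card s) (card b) :=
    le_min (by have := h.card_add_card; omega) (card_le_card h.le_buyers)
  have hwelfare := h.sum_add_sum_le_add_matchedGFT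
  rw [btrGFT_eq]
  split_ifs with hcond
  · linarith [matchedGFT_le_matchedGFT_tradeSize hk]
  · rcases le_or_gt (card b') (tradeSize s b - 1) with hkq | hkq
    · linarith [matchedGFT_mono_of_le_tradeSize hkq (Nat.sub_le (tradeSize s b) 1)]
    · rcases Nat.eq_zero_or_pos (tradeSize s b) with hq | hq
      · have := matchedGFT_le_matchedGFT_tradeSize hk
        rw [hq] at this ⊢
        linarith
      · linarith [h.sum_add_sum_le_of_reduced hq (by omega) hcond]

end IsBuyerPricedAllocation

section BTROutcome

variable {s b : Multiset ℝ} {k : ℕ}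

theorem isBuyerPricedAllocation_drop_take (hks : k ≤ card s) (hkb : k ≤ card b)
    (hpriced : 0 < k → k < card b ∧ s.nthSmallest (k - 1) ≤ b.nthLargest k) :
    IsBuyerPricedAllocation s b ((s.sort (· ≤ ·)).drop k) ((b.sort (· ≤ ·)).reverse.take k) := by
  set l := s.sort (· ≤ ·)
  set m := (b.sort (· ≤ ·)).reverse
  have hl : ((l.take k : List ℝ) : Multiset ℝ) + (l.drop k : List ℝ) = s := by
    rw [coe_add, List.take_append_drop, sort_eq]
  have hm : ((m.take k : List ℝ) : Multiset ℝ) + (m.drop k : List ℝ) = b := by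
    rw [coe_add, List.take_append_drop, coe_reverse, sort_eq]
  have hidle : b - (m.take k : List ℝ) = (m.drop k : List ℝ) := by rw [← hm, add_tsub_cancel_left]
  refine ⟨hl ▸ le_add_self, hm ▸ le_self_add, ?_, fun y hy ↦ ?_⟩
  · simp only [coe_card, List.length_drop, List.length_take, List.length_reverse, l, m,
      length_sort]
    omega
  · rw [← hl, add_tsub_cancel_right, mem_coe, List.mem_take_iff_getElem] at hy
    obtain ⟨i, hi, rfl⟩ := hy
    have hi : i < min k (card s) := by rwa [length_sort] at hi
    obtain ⟨hk, hsb⟩ := hpriced (by omega)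
    have hkm : k < m.length := by rwa [List.length_reverse, length_sort]
    refine ⟨b.nthLargest k, ?_, ?_⟩
    · rw [hidle, mem_coe, nthLargest_eq_getD_reverse hk, List.getD_eq_getElem _ _ hkm]
      exact List.mem_drop_iff_getElem.2 ⟨0, by omega, rfl⟩
    · calc l[i] = s.nthSmallest i := (List.getD_eq_getElem _ _ _).symm
        _ ≤ s.nthSmallest (k - 1) := nthSmallest_mono (by omega) (by omega)
        _ ≤ b.nthLargest k := hsb

theorem sum_drop_add_sum_take (hks : k ≤ card s) (hkb : k ≤ card b) :
    ((s.sort (· ≤ ·)).drop k).sum + ((b.sort (· ≤ ·)).reverse.take k).sum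
      = s.sum + matchedGFT s b k := by
  have hs : s.sum = ((s.sort (· ≤ ·)).take k).sum + ((s.sort (· ≤ ·)).drop k).sum := by
    rw [List.sum_take_add_sum_drop, ← sum_coe, sort_eq]
  rw [matchedGFT, Finset.sum_sub_distrib, sum_range_nthLargest hkb, sum_range_nthSmallest hks, hs]
  ring

theorem exists_isBuyerPricedAllocation_sum_add_sum_eq (s b : Multiset ℝ) :
    ∃ s' b', IsBuyerPricedAllocation s b s' b' ∧ s'.sum + b'.sum = btrGFT s b + s.sum := by
  have hq := tradeSize_le_min s b
  rw [btrGFT_eq]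
  split_ifs with hcond
  · refine ⟨_, _, isBuyerPricedAllocation_drop_take (by omega) (by omega) fun _ ↦ hcond, ?_⟩
    rw [sum_coe, sum_coe, sum_drop_add_sum_take (by omega) (by omega), add_comm]
  · refine ⟨_, _, isBuyerPricedAllocation_drop_take (k := tradeSize s b - 1) (by omega)
      (by omega) fun hk ↦ ⟨by omega, ?_⟩, ?_⟩
    · calc s.nthSmallest (tradeSize s b - 1 - 1) ≤ s.nthSmallest (tradeSize s b - 1) :=
            nthSmallest_mono (by omega) (by omega)
        _ ≤ b.nthLargest (tradeSize s b - 1) := ((lt_tradeSize_iff s b).1 (by omega)).2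
    · rw [sum_coe, sum_coe, sum_drop_add_sum_take (by omega) (by omega), add_comm]

end BTROutcome

theorem btrGFT_add_le (s₁ b₁ s₂ b₂ : Multiset ℝ) :
    btrGFT s₁ b₁ + btrGFT s₂ b₂ ≤ btrGFT (s₁ + s₂) (b₁ + b₂) := by
  obtain ⟨s₁', b₁', h₁, hsum₁⟩ := exists_isBuyerPricedAllocation_sum_add_sum_eq s₁ b₁
  obtain ⟨s₂', b₂', h₂, hsum₂⟩ := exists_isBuyerPricedAllocation_sum_add_sum_eq s₂ b₂
  have := (h₁.add h₂).sum_add_sum_le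
  rw [sum_add, sum_add, sum_add] at this
  linarith

theorem btrGFT_zero : btrGFT 0 0 = 0 := by
  have : tradeSize 0 0 = 0 := by simpa using tradeSize_le_min 0 0
  simp [btrGFT_eq, this, matchedGFT]

/-- Superadditivity of BTR under market unification (deterministic version): unifying `t`
markets into one never decreases the gains from trade of the Buyer Trade Reduction mechanism. -/
theorem btrGFT_superadditive (t : ℕ) (s b : Fin t → Multiset ℝ) :
    ∑ i, btrGFT (s i) (b i) ≤ btrGFT (∑ i, s i) (∑ i, b i) := by
  have hsub := Finset.le_sum_of_subadditive (fun m : Multiset ℝ × Multiset ℝ ↦ -btrGFT m.1 m.2)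
    (by rw [Prod.fst_zero, Prod.snd_zero, btrGFT_zero, neg_zero])
    (fun m m' ↦ by
      rw [Prod.fst_add, Prod.snd_add, ← neg_add, neg_le_neg_iff]
      exact btrGFT_add_le m.1 m.2 m'.1 m'.2)
    Finset.univ fun i ↦ (s i, b i)
  simpa [Prod.fst_sum, Prod.snd_sum] using hsub
end

section
/- (Approximation ratio of BTR with one seller under FSD — coupling core.) Draw m_B + 1 i.i.d. uniform quantiles in (0,1), sorted q^(1) ≥ ... ≥ q^(m_B+1); uniformly choose an index i to be the seller (value v_S(q^(i))), with the remaining indices being buyers (values v_B of their quantiles), where v_B ≥ v_S pointwise (FSD). Then E[(b^(1) - s)·1[b^(1) > s > b^(2)]] ≤ (2/(m_B-1)) · E[(b^(1) - s)·1[i > 2]], where b^(1), b^(2) are the highest and second-highest buyer values and s is the seller value. -/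
open MeasureTheory
open scoped Classical

/-- The highest buyer value when the agent with index `i` (among `n ≥ 2` agents holding
i.i.d. uniform quantiles `q`) is the seller and every other agent `j` is a buyer with value
`v_B (q j)`. -/
noncomputable def topBuyerVal {n : ℕ} (hn : 1 < n) (vB : ℝ → ℝ) (q : Fin n → ℝ)
    (i : Fin n) : ℝ :=
  (Finset.univ.erase i).sup'
    (by
      rw [← Finset.card_pos, Finset.card_erase_of_mem (Finset.mem_univ i)]
      simp only [Finset.card_univ, Fintype.card_fin]
      omega)
    (fun j => vB (q j))

section Aux

lemma erase_nonempty {n : ℕ} (hn : 1 < n) (i : Fin n) : (Finset.univ.erase i).Nonempty := by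
  rw [← Finset.card_pos, Finset.card_erase_of_mem (Finset.mem_univ i)]
  simp only [Finset.card_univ, Fintype.card_fin]
  omega

lemma le_topBuyerVal {n : ℕ} (hn : 1 < n) (vB : ℝ → ℝ) (q : Fin n → ℝ) {i j : Fin n}
    (hj : j ≠ i) : vB (q j) ≤ topBuyerVal hn vB q i := by
  unfold topBuyerVal
  exact Finset.le_sup' (fun j => vB (q j)) (Finset.mem_erase.mpr ⟨hj, Finset.mem_univ j⟩)

lemma ite_inst_congr {α : Sort*} {c d : Prop} {i1 : Decidable c} {i2 : Decidable d}
    (h : c ↔ d) (x y : α) : @ite _ c i1 x y = @ite _ d i2 x y := by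
  have hcd : c = d := propext h
  subst hcd
  rw [Subsingleton.elim i1 i2]

lemma topBuyerVal_le {n : ℕ} (hn : 1 < n) (vB : ℝ → ℝ) (q : Fin n → ℝ) {i : Fin n} {a : ℝ}
    (h : ∀ l ∈ Finset.univ.erase i, vB (q l) ≤ a) : topBuyerVal hn vB q i ≤ a := by
  unfold topBuyerVal
  exact Finset.sup'_le _ _ h

lemma pi_map_eval {n : ℕ} (μ : Measure ℝ) [IsProbabilityMeasure μ] (i : Fin n) :
    (Measure.pi fun _ : Fin n => μ).map (fun q => q i) = μ := by
  ext s hs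
  rw [Measure.map_apply (measurable_pi_apply i) hs]
  have h1 : (fun q : Fin n → ℝ => q i) ⁻¹' s
      = Set.pi Set.univ (Function.update (fun _ => Set.univ) i s) := by
    rw [Set.univ_pi_update_univ]
  rw [h1, Measure.pi_pi]
  rw [Finset.prod_eq_single i (fun j _ hj => by rw [Function.update_of_ne hj]; exact measure_univ)
    (fun h => absurd (Finset.mem_univ i) h)]
  rw [Function.update_self]

lemma integrable_comp_eval {n : ℕ} (μ : Measure ℝ) [IsProbabilityMeasure μ] {f : ℝ → ℝ}
    (hf : Integrable f μ) (i : Fin n) :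
    Integrable (fun q : Fin n → ℝ => f (q i)) (Measure.pi fun _ => μ) := by
  rw [← pi_map_eval μ i] at hf
  exact (integrable_map_measure hf.aestronglyMeasurable
    (measurable_pi_apply i).aemeasurable).mp hf

lemma integrable_ite_gap {n : ℕ} (hn : 1 < n) (vB vS : ℝ → ℝ)
    (hB : Monotone vB) (hS : Monotone vS) (μ : Measure ℝ) [IsProbabilityMeasure μ]
    (hIB : Integrable vB μ) (hIS : Integrable vS μ)
    (P : (Fin n → ℝ) → Prop) (hdec : DecidablePred P) (hP : MeasurableSet {q | P q})
    (i : Fin n) :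
    Integrable (fun q : Fin n → ℝ =>
        @ite ℝ (P q) (hdec q) (topBuyerVal hn vB q i - vS (q i)) 0)
      (Measure.pi fun _ => μ) := by
  letI := hdec
  have hmB : Measurable vB := hB.measurable
  have hmS : Measurable vS := hS.measurable
  have hmtop : Measurable (fun q : Fin n → ℝ => topBuyerVal hn vB q i) := by
    have : Measurable ((Finset.univ.erase i).sup' (erase_nonempty hn i)
        (fun j (q : Fin n → ℝ) => vB (q j))) :=
      Finset.measurable_sup' _ (fun j _ => hmB.comp (measurable_pi_apply j))
    convert this using 1
    ext q
    rw [Finset.sup'_apply]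
    rfl
  have hmeas : Measurable (fun q : Fin n → ℝ =>
      if P q then topBuyerVal hn vB q i - vS (q i) else 0) :=
    Measurable.ite hP (hmtop.sub (hmS.comp (measurable_pi_apply i))) measurable_const
  have hH : Integrable (fun q : Fin n → ℝ =>
      (∑ j : Fin n, |vB (q j)|) + |vS (q i)|) (Measure.pi fun _ => μ) := by
    exact (integrable_finset_sum _ (fun j _ => (integrable_comp_eval μ hIB j).abs)).add
      ((integrable_comp_eval μ hIS i).abs)
  refine Integrable.mono' hH hmeas.aestronglyMeasurable (Filter.Eventually.of_forall ?_)
  intro q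
  by_cases hp : P q
  · rw [if_pos hp]
    have habs : |topBuyerVal hn vB q i| ≤ ∑ j : Fin n, |vB (q j)| := by
      obtain ⟨b, hb, hbe⟩ := Finset.exists_mem_eq_sup' (erase_nonempty hn i)
        (fun j => vB (q j))
      rw [show topBuyerVal hn vB q i = vB (q b) from hbe]
      exact Finset.single_le_sum (f := fun j => |vB (q j)|)
        (fun j _ => abs_nonneg _) (Finset.mem_univ b)
    calc ‖topBuyerVal hn vB q i - vS (q i)‖
        ≤ |topBuyerVal hn vB q i| + |vS (q i)| := abs_sub _ _
      _ ≤ (∑ j : Fin n, |vB (q j)|) + |vS (q i)| := by linarith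
  · rw [if_neg hp]
    simp only [norm_zero]
    positivity

end Aux

lemma btr_pointwise {n : ℕ} (hn2 : 2 < n) (hn : 1 < n) (vB vS : ℝ → ℝ)
    (hB : Monotone vB) (hS : Monotone vS) (hdom : ∀ x : ℝ, vS x ≤ vB x)
    (q : Fin n → ℝ)
    {dA : ∀ i : Fin n, Decidable (∃ j ∈ Finset.univ.erase i, vS (q i) < vB (q j) ∧
        ∀ k ∈ Finset.univ.erase i, k ≠ j → vB (q k) < vS (q i))}
    {dB : ∀ i : Fin n,
        Decidable (2 ≤ ((Finset.univ.erase i).filter (fun j => q i < q j)).card)} :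
    ∑ i : Fin n,
        @ite ℝ (∃ j ∈ Finset.univ.erase i, vS (q i) < vB (q j) ∧
              ∀ k ∈ Finset.univ.erase i, k ≠ j → vB (q k) < vS (q i)) (dA i)
          (topBuyerVal hn vB q i - vS (q i)) 0
      ≤ (2 / ((n : ℝ) - 2)) *
        ∑ i : Fin n,
          @ite ℝ (2 ≤ ((Finset.univ.erase i).filter (fun j => q i < q j)).card) (dB i)
            (topBuyerVal hn vB q i - vS (q i)) 0 := by
  set gap : Fin n → ℝ := fun i => topBuyerVal hn vB q i - vS (q i) with hgap
  set A : Fin n → Prop := fun i => ∃ j ∈ Finset.univ.erase i, vS (q i) < vB (q j) ∧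
      ∀ k ∈ Finset.univ.erase i, k ≠ j → vB (q k) < vS (q i) with hA
  set Bc : Fin n → Prop :=
      fun i => 2 ≤ ((Finset.univ.erase i).filter (fun j => q i < q j)).card with hBc
  suffices h : (∑ i : Fin n, if A i then gap i else 0)
      ≤ (2 / ((n : ℝ) - 2)) * ∑ i : Fin n, (if Bc i then gap i else 0) by
    refine le_trans (le_of_eq ?_) (le_trans h (le_of_eq ?_))
    · exact Finset.sum_congr rfl fun i _ => ite_inst_congr Iff.rfl _ _
    · exact congrArg _ (Finset.sum_congr rfl fun i _ => ite_inst_congr Iff.rfl _ _)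
  have hnR : (2 : ℝ) < (n : ℝ) := by exact_mod_cast hn2
  have hpos : (0 : ℝ) < (n : ℝ) - 2 := by linarith
  have lt_of_vB_lt : ∀ x y : Fin n, vB (q x) < vB (q y) → q x < q y := by
    intro x y h
    by_contra hle
    push_neg at hle
    exact absurd (hB hle) (not_le.mpr h)
  have Gnonneg : ∀ i, 0 ≤ (if Bc i then gap i else 0) := by
    intro i
    by_cases hb : Bc i
    · rw [if_pos hb]
      have hcard : 0 < ((Finset.univ.erase i).filter (fun j => q i < q j)).card := by
        have := hb; omega
      obtain ⟨j, hj⟩ := Finset.card_pos.mp hcard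
      rw [Finset.mem_filter] at hj
      have h1 : vB (q j) ≤ topBuyerVal hn vB q i :=
        le_topBuyerVal hn vB q (Finset.mem_erase.mp hj.1).1
      have h2 : vS (q i) ≤ vB (q i) := hdom _
      have h3 : vB (q i) ≤ vB (q j) := hB hj.2.le
      simp only [hgap]
      linarith
    · rw [if_neg hb]
  -- key structural lemma
  have key : ∀ i j, j ∈ Finset.univ.erase i → vS (q i) < vB (q j) →
      (∀ k ∈ Finset.univ.erase i, k ≠ j → vB (q k) < vS (q i)) →
      ∀ k, k ≠ i → k ≠ j → Bc k ∧ gap i ≤ gap k := by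
    intro i j hjm hjgt hall k hki hkj
    have hji : j ≠ i := (Finset.mem_erase.mp hjm).1
    have hk_lt : vB (q k) < vS (q i) :=
      hall k (Finset.mem_erase.mpr ⟨hki, Finset.mem_univ k⟩) hkj
    have hki' : q k < q i := lt_of_vB_lt k i (lt_of_lt_of_le hk_lt (hdom _))
    have hkj' : q k < q j := lt_of_vB_lt k j (hk_lt.trans hjgt)
    constructor
    · have hsub : ({i, j} : Finset (Fin n)) ⊆
          (Finset.univ.erase k).filter (fun l => q k < q l) := by
        intro l hl
        rw [Finset.mem_insert, Finset.mem_singleton] at hl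
        rcases hl with rfl | rfl
        · exact Finset.mem_filter.mpr
            ⟨Finset.mem_erase.mpr ⟨(Ne.symm hki), Finset.mem_univ _⟩, hki'⟩
        · exact Finset.mem_filter.mpr
            ⟨Finset.mem_erase.mpr ⟨(Ne.symm hkj), Finset.mem_univ _⟩, hkj'⟩
      have hcard : ({i, j} : Finset (Fin n)).card = 2 := Finset.card_pair (Ne.symm hji)
      have := Finset.card_le_card hsub
      rw [hcard] at this
      exact this
    · have h1 : topBuyerVal hn vB q i ≤ topBuyerVal hn vB q k := by
        unfold topBuyerVal
        apply Finset.sup'_le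
        intro l hl
        show vB (q l) ≤ topBuyerVal hn vB q k
        rcases eq_or_ne l j with rfl | hlj
        · exact le_topBuyerVal hn vB q (Ne.symm hkj)
        · have h2 := hall l hl hlj
          have h3 : vB (q i) ≤ topBuyerVal hn vB q k := le_topBuyerVal hn vB q (Ne.symm hki)
          have h4 : vS (q i) ≤ vB (q i) := hdom _
          linarith
      have h2 : vS (q k) ≤ vS (q i) := hS hki'.le
      simp only [hgap]
      linarith
  have gapA_nonneg : ∀ i j, j ∈ Finset.univ.erase i → vS (q i) < vB (q j) → 0 ≤ gap i := by
    intro i j hjm hjgt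
    have h1 : vB (q j) ≤ topBuyerVal hn vB q i :=
      le_topBuyerVal hn vB q (Finset.mem_erase.mp hjm).1
    simp only [hgap]
    linarith
  have hmutual : ∀ a ja b, ja ∈ Finset.univ.erase a → vS (q a) < vB (q ja) →
      (∀ k ∈ Finset.univ.erase a, k ≠ ja → vB (q k) < vS (q a)) →
      A b → b ≠ a → b = ja := by
    intro a ja b hjam hjagt hjaall hAb hba
    by_contra hbja
    have hjaa : ja ≠ a := (Finset.mem_erase.mp hjam).1
    have hba' : vB (q b) < vS (q a) :=
      hjaall b (Finset.mem_erase.mpr ⟨hba, Finset.mem_univ b⟩) hbja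
    have hqba : q b < q a := lt_of_vB_lt b a (lt_of_lt_of_le hba' (hdom _))
    have hSba : vS (q b) ≤ vS (q a) := hS hqba.le
    obtain ⟨jb, hjbm, hjbgt, hjball⟩ := hAb
    by_cases hajb : a = jb
    · have hmem : ja ∈ Finset.univ.erase b :=
        Finset.mem_erase.mpr ⟨fun h => hbja h.symm, Finset.mem_univ ja⟩
      have hne : ja ≠ jb := hajb ▸ hjaa
      have := hjball ja hmem hne
      linarith
    · have hmem : a ∈ Finset.univ.erase b :=
        Finset.mem_erase.mpr ⟨Ne.symm hba, Finset.mem_univ a⟩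
      have := hjball a hmem hajb
      have h4 : vS (q a) ≤ vB (q a) := hdom _
      linarith
  by_cases hAex : ∃ i, A i
  · obtain ⟨i0, hAi0⟩ := hAex
    obtain ⟨j0, hj0m, hj0gt, hj0all⟩ := hAi0
    have hj0i0 : j0 ≠ i0 := (Finset.mem_erase.mp hj0m).1
    set T : Finset (Fin n) := Finset.univ.filter (fun i => A i) with hT
    have hsumF : ∑ i : Fin n, (if A i then gap i else 0) = ∑ i ∈ T, gap i := by
      rw [hT, Finset.sum_filter]
    have hTsub : T ⊆ {i0, j0} := by
      intro i hi
      have hAi : A i := (Finset.mem_filter.mp hi).2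
      rcases eq_or_ne i i0 with rfl | hne
      · exact Finset.mem_insert_self _ _
      · have : i = j0 := hmutual i0 j0 i hj0m hj0gt hj0all hAi hne
        rw [this]
        exact Finset.mem_insert_of_mem (Finset.mem_singleton_self _)
    have hgapT : ∀ i ∈ T, ∀ k, k ≠ i0 → k ≠ j0 → gap i ≤ gap k := by
      intro i hi k hk1 hk2
      have hAi : A i := (Finset.mem_filter.mp hi).2
      rcases eq_or_ne i i0 with rfl | hne
      · exact (key i j0 hj0m hj0gt hj0all k hk1 hk2).2
      · have hij0 : i = j0 := hmutual i0 j0 i hj0m hj0gt hj0all hAi hne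
        obtain ⟨jj, hjjm, hjjgt, hjjall⟩ := hAi
        have hi0jj : i0 = jj :=
          hmutual i jj i0 hjjm hjjgt hjjall ⟨j0, hj0m, hj0gt, hj0all⟩
            (by rw [hij0]; exact Ne.symm hj0i0)
        exact (key i jj hjjm hjjgt hjjall k (by rw [hij0]; exact hk2) (hi0jj ▸ hk1)).2
    have hgapk0 : ∀ k, k ≠ i0 → k ≠ j0 → 0 ≤ gap k := by
      intro k hk1 hk2
      exact le_trans (gapA_nonneg i0 j0 hj0m hj0gt) (key i0 j0 hj0m hj0gt hj0all k hk1 hk2).2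
    have hFle : ∀ k, k ≠ i0 → k ≠ j0 → ∑ i ∈ T, gap i ≤ 2 * gap k := by
      intro k hk1 hk2
      calc ∑ i ∈ T, gap i ≤ ∑ _i ∈ T, gap k :=
            Finset.sum_le_sum (fun i hi => hgapT i hi k hk1 hk2)
        _ = (T.card : ℝ) * gap k := by rw [Finset.sum_const, nsmul_eq_mul]
        _ ≤ 2 * gap k := by
            have hc : T.card ≤ 2 := by
              have := Finset.card_le_card hTsub
              have h2 : ({i0, j0} : Finset (Fin n)).card = 2 := Finset.card_pair hj0i0.symm
              omega
            have hcR : (T.card : ℝ) ≤ 2 := by exact_mod_cast hc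
            exact mul_le_mul_of_nonneg_right hcR (hgapk0 k hk1 hk2)
    set Sc : Finset (Fin n) := Finset.univ \ {i0, j0} with hSc
    have hSccard : (n : ℝ) - 2 ≤ (Sc.card : ℝ) := by
      have h1 : Sc.card = n - ({i0, j0} : Finset (Fin n)).card := by
        rw [hSc, Finset.card_sdiff_of_subset (Finset.subset_univ _), Finset.card_univ, Fintype.card_fin]
      have h2 : ({i0, j0} : Finset (Fin n)).card = 2 := Finset.card_pair hj0i0.symm
      rw [h1, h2]
      have : (2:ℕ) ≤ n := by omega
      push_cast [Nat.cast_sub this]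
      linarith
    have hG_ge : ∀ k ∈ Sc, (∑ i ∈ T, gap i) / 2 ≤ (if Bc k then gap k else 0) := by
      intro k hk
      rw [hSc, Finset.mem_sdiff] at hk
      have hk1 : k ≠ i0 := by
        intro h; exact hk.2 (h ▸ Finset.mem_insert_self _ _)
      have hk2 : k ≠ j0 := by
        intro h; exact hk.2 (h ▸ Finset.mem_insert_of_mem (Finset.mem_singleton_self _))
      rw [if_pos (key i0 j0 hj0m hj0gt hj0all k hk1 hk2).1]
      have hh := hFle k hk1 hk2
      clear_value gap
      linarith
    have hsum1 : Sc.card • ((∑ i ∈ T, gap i) / 2) ≤ ∑ k ∈ Sc, (if Bc k then gap k else 0) :=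
      Finset.card_nsmul_le_sum Sc _ _ hG_ge
    have hsum2 : ∑ k ∈ Sc, (if Bc k then gap k else 0)
        ≤ ∑ k : Fin n, (if Bc k then gap k else 0) :=
      Finset.sum_le_sum_of_subset_of_nonneg (Finset.subset_univ _)
        (fun k _ _ => Gnonneg k)
    have hFnonneg : 0 ≤ ∑ i ∈ T, gap i := by
      apply Finset.sum_nonneg
      intro i hi
      obtain ⟨ji, hjim, hjigt, _⟩ := (Finset.mem_filter.mp hi).2
      exact gapA_nonneg i ji hjim hjigt
    rw [hsumF]
    have hchain : ((n : ℝ) - 2) * ((∑ i ∈ T, gap i) / 2)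
        ≤ ∑ k : Fin n, (if Bc k then gap k else 0) := by
      have h1 : ((n:ℝ) - 2) * ((∑ i ∈ T, gap i) / 2) ≤ (Sc.card : ℝ) * ((∑ i ∈ T, gap i) / 2) :=
        mul_le_mul_of_nonneg_right hSccard (by linarith)
      have h2 : (Sc.card : ℝ) * ((∑ i ∈ T, gap i) / 2)
          = Sc.card • ((∑ i ∈ T, gap i) / 2) := (nsmul_eq_mul _ _).symm
      linarith [hsum1, hsum2, h2 ▸ h1]
    rw [div_mul_eq_mul_div, le_div_iff₀ hpos]
    nlinarith [hchain]
  · have hz : ∀ i : Fin n, (if A i then gap i else 0) = 0 := by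
      intro i
      rw [if_neg (fun h => hAex ⟨i, h⟩)]
    rw [Finset.sum_congr rfl (fun i _ => hz i), Finset.sum_const, smul_zero]
    have : 0 ≤ ∑ i : Fin n, (if Bc i then gap i else 0) := Finset.sum_nonneg fun i _ => Gnonneg i
    positivity

lemma measurableSet_A {n : ℕ} {vB vS : ℝ → ℝ} (hB : Monotone vB) (hS : Monotone vS) (i : Fin n) :
    MeasurableSet {q : Fin n → ℝ | ∃ j ∈ Finset.univ.erase i, vS (q i) < vB (q j) ∧
      ∀ k ∈ Finset.univ.erase i, k ≠ j → vB (q k) < vS (q i)} := by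
  have hmB := hB.measurable
  have hmS := hS.measurable
  have he : {q : Fin n → ℝ | ∃ j ∈ Finset.univ.erase i, vS (q i) < vB (q j) ∧
      ∀ k ∈ Finset.univ.erase i, k ≠ j → vB (q k) < vS (q i)}
      = ⋃ j ∈ (Finset.univ.erase i : Finset (Fin n)),
          ({q : Fin n → ℝ | vS (q i) < vB (q j)} ∩
            ⋂ k ∈ (Finset.univ.erase i : Finset (Fin n)), ⋂ (_ : k ≠ j),
              {q : Fin n → ℝ | vB (q k) < vS (q i)}) := by
    ext p
    simp only [Set.mem_setOf_eq, Set.mem_iUnion, Set.mem_inter_iff, Set.mem_iInter]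
    tauto
  rw [he]
  refine Set.Finite.measurableSet_biUnion (Set.toFinite _) fun j _ => ?_
  refine (measurableSet_lt (hmS.comp (measurable_pi_apply i))
    (hmB.comp (measurable_pi_apply j))).inter ?_
  refine Set.Finite.measurableSet_biInter (Set.toFinite _) fun k _ => ?_
  exact MeasurableSet.iInter fun _ =>
    measurableSet_lt (hmB.comp (measurable_pi_apply k)) (hmS.comp (measurable_pi_apply i))

lemma measurableSet_B {n : ℕ} (i : Fin n) :
    MeasurableSet
      {q : Fin n → ℝ | 2 ≤ ((Finset.univ.erase i).filter (fun j => q i < q j)).card} := by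
  have he : {q : Fin n → ℝ | 2 ≤ ((Finset.univ.erase i).filter (fun j => q i < q j)).card}
      = ⋃ a ∈ (Finset.univ.erase i : Finset (Fin n)),
          ⋃ b ∈ (Finset.univ.erase i : Finset (Fin n)), ⋃ (_ : a ≠ b),
          ({q : Fin n → ℝ | q i < q a} ∩ {q : Fin n → ℝ | q i < q b}) := by
    ext p
    simp only [Set.mem_setOf_eq, Set.mem_iUnion, Set.mem_inter_iff]
    constructor
    · intro h
      obtain ⟨a, ha, b, hb, hab⟩ := Finset.one_lt_card.mp h
      rw [Finset.mem_filter] at ha hb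
      exact ⟨a, ha.1, b, hb.1, hab, ha.2, hb.2⟩
    · rintro ⟨a, ha, b, hb, hab, h1, h2⟩
      exact Finset.one_lt_card.mpr
        ⟨a, Finset.mem_filter.mpr ⟨ha, h1⟩, b, Finset.mem_filter.mpr ⟨hb, h2⟩, hab⟩
  rw [he]
  refine Set.Finite.measurableSet_biUnion (Set.toFinite _) fun a _ => ?_
  refine Set.Finite.measurableSet_biUnion (Set.toFinite _) fun b _ => ?_
  refine MeasurableSet.iUnion fun _ => ?_
  exact (measurableSet_lt (measurable_pi_apply i) (measurable_pi_apply a)).inter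
    (measurableSet_lt (measurable_pi_apply i) (measurable_pi_apply b))

/-- Coupling core of the approximation ratio of BTR with one seller under FSD: draw `m_B + 1`
i.i.d. uniform quantiles on `(0,1)` and a uniformly random index `i` for the seller (value
`v_S (q i)`), the others being buyers (values `v_B` of their quantiles), with `v_B ≥ v_S`
pointwise and both nondecreasing.  Then
`E[(b^(1) - s)·1[b^(1) > s > b^(2)]] ≤ (2/(m_B - 1))·E[(b^(1) - s)·1[seller rank > 2]]`,
where the event `b^(1) > s > b^(2)` is that exactly one buyer's value strictly exceeds `s`
while all other buyers' values are strictly below `s`, and the seller has rank `> 2` when at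
least two buyers hold quantiles exceeding the seller's. -/
theorem btr_one_seller_coupling (mB : ℕ) (hm : 2 ≤ mB) (vB vS : ℝ → ℝ)
    (hB : Monotone vB) (hS : Monotone vS) (hdom : ∀ x : ℝ, vS x ≤ vB x)
    (hIB : Integrable vB ((volume : Measure ℝ).restrict (Set.Ioo 0 1)))
    (hIS : Integrable vS ((volume : Measure ℝ).restrict (Set.Ioo 0 1))) :
    (1 / ((mB : ℝ) + 1)) * ∑ i : Fin (mB + 1),
        ∫ q : Fin (mB + 1) → ℝ,
          (if ∃ j ∈ Finset.univ.erase i, vS (q i) < vB (q j) ∧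
                ∀ k ∈ Finset.univ.erase i, k ≠ j → vB (q k) < vS (q i)
            then topBuyerVal (by omega) vB q i - vS (q i) else 0)
          ∂(Measure.pi fun _ => (volume : Measure ℝ).restrict (Set.Ioo 0 1))
      ≤ (2 / ((mB : ℝ) - 1)) *
          ((1 / ((mB : ℝ) + 1)) * ∑ i : Fin (mB + 1),
            ∫ q : Fin (mB + 1) → ℝ,
              (if 2 ≤ ((Finset.univ.erase i).filter (fun j => q i < q j)).card
                then topBuyerVal (by omega) vB q i - vS (q i) else 0)
              ∂(Measure.pi fun _ => (volume : Measure ℝ).restrict (Set.Ioo 0 1))) := by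
  have hn : 1 < mB + 1 := by omega
  have hn2 : 2 < mB + 1 := by omega
  haveI hprob : IsProbabilityMeasure ((volume : Measure ℝ).restrict (Set.Ioo 0 1)) := by
    constructor
    rw [Measure.restrict_apply_univ, Real.volume_Ioo]
    norm_num
  have hFint : ∀ i : Fin (mB + 1), Integrable
      (fun q : Fin (mB + 1) → ℝ =>
        if ∃ j ∈ Finset.univ.erase i, vS (q i) < vB (q j) ∧
              ∀ k ∈ Finset.univ.erase i, k ≠ j → vB (q k) < vS (q i)
          then topBuyerVal hn vB q i - vS (q i) else 0)
      (Measure.pi fun _ => (volume : Measure ℝ).restrict (Set.Ioo 0 1)) := fun i =>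
    integrable_ite_gap hn vB vS hB hS _ hIB hIS _ _ (measurableSet_A hB hS i) i
  have hGint : ∀ i : Fin (mB + 1), Integrable
      (fun q : Fin (mB + 1) → ℝ =>
        if 2 ≤ ((Finset.univ.erase i).filter (fun j => q i < q j)).card
          then topBuyerVal hn vB q i - vS (q i) else 0)
      (Measure.pi fun _ => (volume : Measure ℝ).restrict (Set.Ioo 0 1)) := fun i =>
    integrable_ite_gap hn vB vS hB hS _ hIB hIS _ _ (measurableSet_B i) i
  have hcast : ((mB + 1 : ℕ) : ℝ) - 2 = (mB : ℝ) - 1 := by push_cast; ring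
  have key : ∑ i : Fin (mB + 1), ∫ q : Fin (mB + 1) → ℝ,
        (if ∃ j ∈ Finset.univ.erase i, vS (q i) < vB (q j) ∧
              ∀ k ∈ Finset.univ.erase i, k ≠ j → vB (q k) < vS (q i)
          then topBuyerVal hn vB q i - vS (q i) else 0)
        ∂(Measure.pi fun _ => (volume : Measure ℝ).restrict (Set.Ioo 0 1))
      ≤ (2 / ((mB : ℝ) - 1)) * ∑ i : Fin (mB + 1), ∫ q : Fin (mB + 1) → ℝ,
        (if 2 ≤ ((Finset.univ.erase i).filter (fun j => q i < q j)).card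
          then topBuyerVal hn vB q i - vS (q i) else 0)
        ∂(Measure.pi fun _ => (volume : Measure ℝ).restrict (Set.Ioo 0 1)) := by
    rw [← integral_finset_sum _ (fun i _ => hFint i),
      ← integral_finset_sum _ (fun i _ => hGint i), ← integral_const_mul]
    apply integral_mono (integrable_finset_sum _ fun i _ => hFint i)
      ((integrable_finset_sum _ fun i _ => hGint i).const_mul _)
    intro q
    rw [show ((mB : ℝ) - 1) = ((mB + 1 : ℕ) : ℝ) - 2 from by push_cast; ring]
    exact btr_pointwise hn2 hn vB vS hB hS hdom q
  have hfrac : (0 : ℝ) ≤ 1 / ((mB : ℝ) + 1) := by positivity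
  calc (1 / ((mB : ℝ) + 1)) * ∑ i : Fin (mB + 1),
        ∫ q : Fin (mB + 1) → ℝ,
          (if ∃ j ∈ Finset.univ.erase i, vS (q i) < vB (q j) ∧
                ∀ k ∈ Finset.univ.erase i, k ≠ j → vB (q k) < vS (q i)
            then topBuyerVal (by omega : 1 < mB + 1) vB q i - vS (q i) else 0)
          ∂(Measure.pi fun _ => (volume : Measure ℝ).restrict (Set.Ioo 0 1))
      ≤ (1 / ((mB : ℝ) + 1)) * ((2 / ((mB : ℝ) - 1)) * ∑ i : Fin (mB + 1),
          ∫ q : Fin (mB + 1) → ℝ,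
            (if 2 ≤ ((Finset.univ.erase i).filter (fun j => q i < q j)).card
              then topBuyerVal hn vB q i - vS (q i) else 0)
            ∂(Measure.pi fun _ => (volume : Measure ℝ).restrict (Set.Ioo 0 1))) :=
        mul_le_mul_of_nonneg_left key hfrac
    _ = (2 / ((mB : ℝ) - 1)) *
          ((1 / ((mB : ℝ) + 1)) * ∑ i : Fin (mB + 1),
            ∫ q : Fin (mB + 1) → ℝ,
              (if 2 ≤ ((Finset.univ.erase i).filter (fun j => q i < q j)).card
                then topBuyerVal (by omega : 1 < mB + 1) vB q i - vS (q i) else 0)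
              ∂(Measure.pi fun _ => (volume : Measure ℝ).restrict (Set.Ioo 0 1))) := by
        ring
end

section
/- Let m_B ≥ 2 and k ≥ 1 be naturals, and let buyers be i.i.d. with value 2 w.p. 1/2 and 0 otherwise, the seller value be 1 w.p. 1/2 and 0 otherwise, independent. Then OPT(1, m_B) = (3/2)·(1 - 2^{-m_B}) and BTR(1, m_B + k) = (3/2)·(1 - 2^{-(m_B+k)} - (m_B+k)·2^{-(m_B+k)}). -/
/-! The seller and every buyer are uniform on two points, so the joint law of the seller and
`n` buyers is uniform on the `2 ^ (n + 1)` atoms `(s, 2 • 𝟙_S)` with `s ∈ {1, 0}` and `S` the set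
of high buyers, and both integrals are finite averages. At such an atom the optimal gain is `2 - s`
if `S` is nonempty and `0` otherwise, while BTR realises `2 - s` exactly when `#S ≥ 2`. Summing
over `s` gives `3` per counted set, and there are `2 ^ n - 1`, resp. `2 ^ n - 1 - n`, of them. -/

open MeasureTheory

noncomputable def buyerHalfDist : Measure ℝ :=
  (2 : ENNReal)⁻¹ • Measure.dirac (2 : ℝ) + (2 : ENNReal)⁻¹ • Measure.dirac (0 : ℝ)

noncomputable def sellerHalfDist : Measure ℝ :=
  (2 : ENNReal)⁻¹ • Measure.dirac (1 : ℝ) + (2 : ENNReal)⁻¹ • Measure.dirac (0 : ℝ)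

open Finset

section TwoPointProduct

open Measure

variable {ι α β : Type*} [Fintype ι] [DecidableEq ι] [MeasurableSpace α] [MeasurableSpace β]

instance isProbabilityMeasure_half_dirac_add_half_dirac (a b : α) :
    IsProbabilityMeasure ((2 : ENNReal)⁻¹ • dirac a + (2 : ENNReal)⁻¹ • dirac b) :=
  ⟨by simp [ENNReal.inv_two_add_inv_two]⟩

theorem pi_half_dirac_add_half_dirac (a b : α) :
    Measure.pi (fun _ : ι => (2 : ENNReal)⁻¹ • dirac a + (2 : ENNReal)⁻¹ • dirac b)
      = ((2 : ENNReal) ^ Fintype.card ι)⁻¹ •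
          ∑ S : Finset ι, dirac (fun i => if i ∈ S then a else b) := by
  refine Measure.pi_eq fun s hs => ?_
  have hδ : ∀ x : ι → α, dirac x (Set.univ.pi s) = ∏ i, (s i).indicator 1 (x i) := by
    intro x
    rw [dirac_apply' _ (.univ_pi hs), ← Finset.coe_univ, Set.indicator_pi_one_apply]
  simp only [Measure.smul_apply, Measure.add_apply, Measure.finsetSum_apply, hδ,
    dirac_apply' _ (hs _), smul_eq_mul, ← mul_add, prod_mul_distrib, prod_const, card_univ,
    ENNReal.inv_pow, Fintype.prod_add, apply_ite, prod_ite, filter_mem_eq_inter, univ_inter,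
    ← compl_filter]

theorem half_dirac_add_half_dirac_prod_pi (a b : α) (c d : β) :
    ((2 : ENNReal)⁻¹ • dirac a + (2 : ENNReal)⁻¹ • dirac b).prod
        (Measure.pi fun _ : ι => (2 : ENNReal)⁻¹ • dirac c + (2 : ENNReal)⁻¹ • dirac d)
      = ((2 : ENNReal) ^ (Fintype.card ι + 1))⁻¹ • ∑ S : Finset ι,
          (dirac (a, fun i => if i ∈ S then c else d)
            + dirac (b, fun i => if i ∈ S then c else d)) := by
  rw [pi_half_dirac_add_half_dirac, Measure.prod_smul_right, ← Measure.sum_fintype,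
    Measure.prod_sum_right, Measure.sum_fintype]
  simp only [Measure.add_prod, Measure.prod_smul_left, dirac_prod_dirac, ← smul_add,
    ← Finset.smul_sum, smul_smul]
  rw [pow_succ, ENNReal.mul_inv (by simp) (by simp)]

theorem integral_half_dirac_add_half_dirac_prod_pi {E : Type*} [NormedAddCommGroup E]
    [NormedSpace ℝ E] [CompleteSpace E] [MeasurableSingletonClass α] [MeasurableSingletonClass β]
    (a b : α) (c d : β) (f : α × (ι → β) → E) :
    ∫ x, f x ∂((2 : ENNReal)⁻¹ • dirac a + (2 : ENNReal)⁻¹ • dirac b).prod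
        (Measure.pi fun _ : ι => (2 : ENNReal)⁻¹ • dirac c + (2 : ENNReal)⁻¹ • dirac d)
      = ((2 : ℝ) ^ (Fintype.card ι + 1))⁻¹ • ∑ S : Finset ι,
          (f (a, fun i => if i ∈ S then c else d) + f (b, fun i => if i ∈ S then c else d)) := by
  have hint : ∀ x : α × (ι → β), Integrable f (dirac x) := fun _ =>
    integrable_dirac enorm_lt_top
  rw [half_dirac_add_half_dirac_prod_pi, integral_smul_measure,
    integral_finsetSum_measure fun _ _ => (hint _).add_measure (hint _)]
  simp [integral_add_measure (hint _) (hint _)]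

end TwoPointProduct

section SubsetCounting

variable {ι : Type*} [Fintype ι]

theorem card_filter_card_eq (m : ℕ) :
    #{S : Finset ι | #S = m} = (Fintype.card ι).choose m := by
  rw [← powerset_univ, ← powersetCard_eq_filter, card_powersetCard, card_univ]

theorem sum_ite_le_card {R : Type*} [Ring R] (j : ℕ) (c : R) :
    ∑ S : Finset ι, (if j ≤ #S then c else 0)
      = (2 ^ Fintype.card ι - ∑ m ∈ range j, ((Fintype.card ι).choose m : R)) * c := by
  have hsmall : ∑ S : Finset ι, (if #S < j then c else 0)
      = (∑ m ∈ range j, ((Fintype.card ι).choose m : R)) * c := by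
    have hsplit : ∀ S : Finset ι, (if #S < j then c else 0)
        = ∑ m ∈ range j, if #S = m then c else 0 := fun S => by
      simp [sum_ite_eq]
    simp_rw [hsplit]
    rw [sum_comm, sum_mul]
    simp_rw [← sum_filter, sum_const, card_filter_card_eq, nsmul_eq_mul]
  have hall : ∑ _S : Finset ι, c = 2 ^ Fintype.card ι * c := by
    simp [sum_const, card_univ, Fintype.card_finset, nsmul_eq_mul]
  rw [sub_mul, ← hsmall, ← hall, eq_sub_iff_add_eq, ← sum_add_distrib]
  refine sum_congr rfl fun S _ => ?_
  by_cases h : j ≤ #S <;> simp [h]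

end SubsetCounting

section BuyerProfiles

variable {ι : Type*} [DecidableEq ι]

theorem Real.iSup_ite_mem_zero [Finite ι] {a : ℝ} (ha : 0 ≤ a) (S : Finset ι) :
    (⨆ i, if i ∈ S then a else 0) = if S.Nonempty then a else 0 := by
  rcases S.eq_empty_or_nonempty with rfl | ⟨j, hj⟩
  · simp
  · have : Nonempty ι := ⟨j⟩
    rw [if_pos ⟨j, hj⟩]
    refine le_antisymm (ciSup_le fun i => ?_) ?_
    · split_ifs <;> simp [ha]
    · exact le_ciSup_of_le (Set.finite_range _).bddAbove j (by simp [hj])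

theorem max_iSup_ite_mem_sub_zero [Finite ι] {s : ℝ} (hs0 : 0 ≤ s) (hs2 : s ≤ 2) (S : Finset ι) :
    max ((⨆ i, if i ∈ S then (2 : ℝ) else 0) - s) 0 = if 1 ≤ #S then 2 - s else 0 := by
  simp only [Real.iSup_ite_mem_zero zero_le_two, ← one_le_card]
  split_ifs <;> simp [hs0, hs2]

theorem filter_ite_mem_eq_left [Fintype ι] {M : Type*} [DecidableEq M] {a b : M} (hba : b ≠ a)
    (S : Finset ι) : ({i | (if i ∈ S then a else b) = a} : Finset ι) = S := by
  ext i
  by_cases h : i ∈ S <;> simp [h, hba]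

theorem ite_two_le_card_filter_iSup_sub [Fintype ι] (s : ℝ) (S : Finset ι) :
    (if 2 ≤ #{i | (if i ∈ S then (2 : ℝ) else 0) = 2}
      then (⨆ i, if i ∈ S then (2 : ℝ) else 0) - s else 0)
      = if 2 ≤ #S then 2 - s else 0 := by
  rw [filter_ite_mem_eq_left two_ne_zero.symm]
  split_ifs with h
  · rw [Real.iSup_ite_mem_zero zero_le_two, if_pos (card_pos.mp (by omega))]
  · rfl

end BuyerProfiles

theorem two_point_opt_and_btr_general (mB k : ℕ) :
    ((∫ x : ℝ × (Fin mB → ℝ), max ((⨆ i, x.2 i) - x.1) 0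
        ∂(sellerHalfDist.prod (Measure.pi fun _ => buyerHalfDist)))
      = (3 / 2) * (1 - (1 / 2 : ℝ) ^ mB))
    ∧ ((∫ x : ℝ × (Fin (mB + k) → ℝ),
          (if 2 ≤ (Finset.univ.filter fun i => x.2 i = 2).card
            then (⨆ i, x.2 i) - x.1 else 0)
          ∂(sellerHalfDist.prod (Measure.pi fun _ => buyerHalfDist)))
        = (3 / 2) * (1 - (1 / 2 : ℝ) ^ (mB + k)
            - ((mB : ℝ) + k) * (1 / 2 : ℝ) ^ (mB + k))) := by
  simp only [sellerHalfDist, buyerHalfDist, integral_half_dirac_add_half_dirac_prod_pi]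
  constructor
  · simp only [max_iSup_ite_mem_sub_zero zero_le_one one_le_two,
      max_iSup_ite_mem_sub_zero le_rfl zero_le_two, ite_add_ite, add_zero, sum_ite_le_card,
      Fintype.card_fin, sum_range_one, Nat.choose_zero_right, smul_eq_mul, one_div, inv_pow]
    field_simp
    ring
  · simp only [ite_two_le_card_filter_iSup_sub, ite_add_ite, add_zero, sum_ite_le_card,
      Fintype.card_fin, sum_range_succ, sum_range_zero, Nat.choose_zero_right,
      Nat.choose_one_right, smul_eq_mul, one_div, inv_pow]
    push_cast
    field_simp
    ring

/-- With buyers i.i.d. valued `2` w.p. `1/2` (else `0`) and a single seller valued `1` w.p.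
`1/2` (else `0`), for `m_B ≥ 2` and `k ≥ 1`:
`OPT(1, m_B) = (3/2)·(1 - 2^{-m_B})` (the optimal GFT is `(max_i b_i - s)₊`) and
`BTR(1, m_B + k) = (3/2)·(1 - 2^{-(m_B+k)} - (m_B+k)·2^{-(m_B+k)})` (BTR trades, with GFT
`max_i b_i - s`, exactly when at least two buyers have value `2`). -/
theorem two_point_opt_and_btr (mB k : ℕ) (hm : 2 ≤ mB) (hk : 1 ≤ k) :
    ((∫ x : ℝ × (Fin mB → ℝ), max ((⨆ i, x.2 i) - x.1) 0
        ∂(sellerHalfDist.prod (Measure.pi fun _ => buyerHalfDist)))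
      = (3 / 2) * (1 - (1 / 2 : ℝ) ^ mB))
    ∧ ((∫ x : ℝ × (Fin (mB + k) → ℝ),
          (if 2 ≤ (Finset.univ.filter fun i => x.2 i = 2).card
            then (⨆ i, x.2 i) - x.1 else 0)
          ∂(sellerHalfDist.prod (Measure.pi fun _ => buyerHalfDist)))
        = (3 / 2) * (1 - (1 / 2 : ℝ) ^ (mB + k)
            - ((mB : ℝ) + k) * (1 / 2 : ℝ) ^ (mB + k))) :=
  two_point_opt_and_btr_general mB k
end
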